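/- arXiv:2604.08691 — 7 statements merged into one kernel-verified Lean document; each statement's English description precedes it below -/
import Mathlib

section
/- Fix d ≥ 3 and a sequence p_n ∈ (0,1) with sup_n p_n < 1 and p_n = Ω(n^{−(d−1)} log^{c} n) for some constant c ≥ 4(d−1)/(2d−3). Let k = k(n) satisfy k / ( (p_n/(1−p_n))^{1/(2(d−1))} √n ) → ∞, and set λ* := (1−p_n)(k−1)·C(k−2,d−2). Then as n → ∞: (i) √(p_n·n^{d−1}) / λ* → 0; (ii) √(p_n·k·n^{d−2}·log n) / λ* → 0; and (iii) √k·log n / λ* → 0. -/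
open MeasureTheory Filter Finset Matrix
open scoped ENNReal

namespace HPC

/-- Hyperedges: `d`-element subsets of `[n]`. -/
abbrev Edge (n d : ℕ) : Type := {e : Finset (Fin n) // e.card = d}

/-- A hyperedge configuration. -/
abbrev Config (n d : ℕ) : Type := Edge n d → Bool

instance {n : ℕ} : MeasurableSpace (Finset (Fin n)) := ⊤

/-- Bernoulli measure on `Bool` with success probability `p`. -/
noncomputable def bern (p : ℝ) : Measure Bool :=
  ENNReal.ofReal p • Measure.dirac true + ENNReal.ofReal (1 - p) • Measure.dirac false

/-- Law of the indicator of hyperedge `e` when the planted set is `S`: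
hyperedges inside `S` are present surely, the others with probability `p`. -/
noncomputable def edgeLaw (n d : ℕ) (p : ℝ) (S : Finset (Fin n)) (e : Edge n d) :
    Measure Bool :=
  if (e : Finset (Fin n)) ⊆ S then Measure.dirac true else bern p

/-- Conditional law of the configuration given the planted set `S`. -/
noncomputable def condLaw (n d : ℕ) (p : ℝ) (S : Finset (Fin n)) : Measure (Config n d) :=
  Measure.pi fun e => edgeLaw n d p S e

/-- Marginal law `P_k` of the configuration, the planted set being uniform of size `k`. -/
noncomputable def law (n d : ℕ) (p : ℝ) (k : ℕ) : Measure (Config n d) :=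
  (((univ : Finset (Finset (Fin n))).filter fun S => S.card = k).card : ℝ≥0∞)⁻¹ •
    ∑ S ∈ (univ : Finset (Finset (Fin n))).filter fun S => S.card = k, condLaw n d p S

/-- Joint law of the planted set (uniform of size `k`) and the configuration. -/
noncomputable def jointLaw (n d : ℕ) (p : ℝ) (k : ℕ) :
    Measure (Finset (Fin n) × Config n d) :=
  (((univ : Finset (Finset (Fin n))).filter fun S => S.card = k).card : ℝ≥0∞)⁻¹ •
    ∑ S ∈ (univ : Finset (Finset (Fin n))).filter fun S => S.card = k,
      Measure.map (fun H => (S, H)) (condLaw n d p S)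

/-- Adjacency matrix (pairwise co-occurrence counts) of a configuration. -/
noncomputable def adj (n d : ℕ) (H : Config n d) : Matrix (Fin n) (Fin n) ℝ :=
  Matrix.of fun i j =>
    if i = j then 0 else
      ∑ e : Edge n d,
        if i ∈ (e : Finset (Fin n)) ∧ j ∈ (e : Finset (Fin n)) ∧ H e = true then (1 : ℝ) else 0

/-- Null-model expectation `E₀[A]`. -/
noncomputable def expAdj (n d : ℕ) (p : ℝ) : Matrix (Fin n) (Fin n) ℝ :=
  Matrix.of fun i j => if i = j then 0 else ((n - 2).choose (d - 2) : ℝ) * p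

/-- Centered adjacency matrix `M = A − E₀[A]`. -/
noncomputable def centered (n d : ℕ) (p : ℝ) (H : Config n d) : Matrix (Fin n) (Fin n) ℝ :=
  adj n d H - expAdj n d p

/-- Spectral (ℓ²-operator) norm of a real square matrix. -/
noncomputable def specNorm {n : ℕ} (M : Matrix (Fin n) (Fin n) ℝ) : ℝ :=
  ‖LinearMap.toContinuousLinearMap (Matrix.toEuclideanLin M)‖

/-- Euclidean norm on `Fin n → ℝ`. -/
noncomputable def norm2 {n : ℕ} (v : Fin n → ℝ) : ℝ := Real.sqrt (∑ i, v i ^ 2)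

/-- Supremum norm on `Fin n → ℝ`. -/
noncomputable def normInf {n : ℕ} (v : Fin n → ℝ) : ℝ := ‖v‖

/-- Two-to-infinity norm: maximal Euclidean row norm. -/
noncomputable def norm2toInf {n : ℕ} (M : Matrix (Fin n) (Fin n) ℝ) : ℝ :=
  normInf fun i => norm2 (M i)

/-- `u` is a unit eigenvector of `M` for the eigenvalue `lam`, and `lam` is the
largest eigenvalue of `M`. -/
def IsTopEigenpair {n : ℕ} (M : Matrix (Fin n) (Fin n) ℝ) (lam : ℝ) (u : Fin n → ℝ) : Prop :=
  norm2 u = 1 ∧ M.mulVec u = lam • u ∧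
    ∀ (mu : ℝ) (v : Fin n → ℝ), v ≠ 0 → M.mulVec v = mu • v → mu ≤ lam

/-- `T` is a set of indices of `k` largest entries of `|u|` (ties broken arbitrarily). -/
def IsTopK {n : ℕ} (k : ℕ) (u : Fin n → ℝ) (T : Finset (Fin n)) : Prop :=
  T.card = k ∧ ∀ i ∈ T, ∀ j ∉ T, |u j| ≤ |u i|

/-- Normalized indicator vector `1_T / √|T|`. -/
noncomputable def uInd {n : ℕ} (T : Finset (Fin n)) : Fin n → ℝ :=
  fun i => if i ∈ T then (Real.sqrt T.card)⁻¹ else 0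

/-- Normalized indicator vector `1_S / √k`. -/
noncomputable def uStar {n : ℕ} (k : ℕ) (S : Finset (Fin n)) : Fin n → ℝ :=
  fun i => if i ∈ S then (Real.sqrt k)⁻¹ else 0

/-- `c_e(T) = |e ∩ T|·(|e ∩ T| − 1)`. -/
noncomputable def cE {n : ℕ} (e T : Finset (Fin n)) : ℝ :=
  ((e ∩ T).card : ℝ) * (((e ∩ T).card : ℝ) - 1)

/-- Co-membership matrix of a hyperedge. -/
noncomputable def coB {n : ℕ} (e : Finset (Fin n)) : Matrix (Fin n) (Fin n) ℝ :=
  Matrix.of fun i j => if i ≠ j ∧ i ∈ e ∧ j ∈ e then 1 else 0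

/-- `λ* = (1 − p)(k − 1)·C(k−2, d−2)`. -/
noncomputable def lamStar (d k : ℕ) (p : ℝ) : ℝ :=
  (1 - p) * ((k : ℝ) - 1) * ((k - 2).choose (d - 2) : ℝ)

noncomputable def wIn (n d k : ℕ) (p : ℝ) : ℝ :=
  ((k - 2).choose (d - 2) : ℝ) +
    p * (((n - 2).choose (d - 2) : ℝ) - ((k - 2).choose (d - 2) : ℝ))

noncomputable def wOut (n d : ℕ) (p : ℝ) : ℝ := p * ((n - 2).choose (d - 2) : ℝ)

/-- `M* = (w_in − w_out)·(1_S 1_Sᵀ − I_S)`, the conditional expectation `E_S[M]`. -/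
noncomputable def mStarOf (n d k : ℕ) (p : ℝ) (S : Finset (Fin n)) :
    Matrix (Fin n) (Fin n) ℝ :=
  Matrix.of fun i j =>
    (wIn n d k p - wOut n d p) *
      ((if i ∈ S then (1 : ℝ) else 0) * (if j ∈ S then 1 else 0) -
        if i = j ∧ i ∈ S then 1 else 0)

/-- Leave-one-out perturbation `B^{(m)} = Σ_{e ∋ m} (H_e − p)·B_e`. -/
noncomputable def bMat (n d : ℕ) (p : ℝ) (H : Config n d) (m : Fin n) :
    Matrix (Fin n) (Fin n) ℝ :=
  ∑ e : Edge n d,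
    if m ∈ (e : Finset (Fin n)) then
      ((if H e then (1 : ℝ) else 0) - p) • coB (e : Finset (Fin n))
    else 0

/-- `(lam, U)` is an orthonormal eigendecomposition of `A` with eigenvalues listed in
nonincreasing order. -/
def IsEigenDecomp {n : ℕ} (A : Matrix (Fin n) (Fin n) ℝ) (lam : Fin n → ℝ)
    (U : Fin n → Fin n → ℝ) : Prop :=
  (∀ i j, U i ⬝ᵥ U j = if i = j then (1 : ℝ) else 0) ∧
    (∀ i, A.mulVec (U i) = lam i • U i) ∧ Antitone lam

/-- Maximum of a real function over `Fin n`, `n > 0`. -/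
noncomputable def maxOver {n : ℕ} (hn : 0 < n) (f : Fin n → ℝ) : ℝ :=
  (univ : Finset (Fin n)).sup' ⟨⟨0, hn⟩, Finset.mem_univ _⟩ f

/-- `min_{i ≥ 2} |lam i − x|`, the minimum over non-leading indices. -/
noncomputable def minOffTop {n : ℕ} [NeZero n] (hn : 2 ≤ n) (lam : Fin n → ℝ) (x : ℝ) : ℝ :=
  ((univ : Finset (Fin n)).filter fun i => i ≠ 0).inf'
    ⟨⟨1, by omega⟩, by
      simp only [Finset.mem_filter, Finset.mem_univ, true_and, ne_eq]
      intro h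
      simpa using congrArg Fin.val h⟩
    fun i => |lam i - x|

end HPC

open HPC MeasureTheory Filter Finset Matrix
open scoped ENNReal Topology

-- auxiliary lemmas
open Nat in
lemma nat_pow_le_aux (d kk : ℕ) (hd : 3 ≤ d) (hk : 2*d ≤ kk) :
    kk ^ (d-1) ≤ 2^(d-1) * (d-2)! * ((kk-1) * (kk-2).choose (d-2)) := by
  have h1 : (kk - d + 1)^(d-2) ≤ (kk-2).descFactorial (d-2) := by
    have e : kk - 2 + 1 - (d - 2) = kk - d + 1 := by omega
    have := Nat.pow_sub_le_descFactorial (kk-2) (d-2)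
    rwa [e] at this
  have h2 : (kk-2).descFactorial (d-2) = (d-2)! * (kk-2).choose (d-2) :=
    Nat.descFactorial_eq_factorial_mul_choose _ _
  have h3 : kk ≤ 2 * (kk - d + 1) := by omega
  have h4 : kk ≤ 2 * (kk - 1) := by omega
  have h5 : kk ^ (d-2) ≤ 2^(d-2) * (d-2)! * (kk-2).choose (d-2) := by
    calc kk ^ (d-2) ≤ (2 * (kk - d + 1))^(d-2) := Nat.pow_le_pow_left h3 _
      _ = 2^(d-2) * (kk - d + 1)^(d-2) := by rw [mul_pow]
      _ ≤ 2^(d-2) * ((d-2)! * (kk-2).choose (d-2)) := by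
          exact Nat.mul_le_mul_left _ (h1.trans (le_of_eq h2))
      _ = 2^(d-2) * (d-2)! * (kk-2).choose (d-2) := by ring
  have hd1 : d - 1 = (d-2) + 1 := by omega
  calc kk ^ (d-1) = kk ^ (d-2) * kk := by rw [hd1, pow_succ]
    _ ≤ (2^(d-2) * (d-2)! * (kk-2).choose (d-2)) * (2 * (kk-1)) :=
        Nat.mul_le_mul h5 h4
    _ = (2 * 2^(d-2)) * (d-2)! * ((kk-1) * (kk-2).choose (d-2)) := by ring
    _ = 2^(d-1) * (d-2)! * ((kk-1) * (kk-2).choose (d-2)) := by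
        rw [hd1, pow_succ]; ring

lemma lamStar_lb {d kk : ℕ} {p : ℝ} (hd : 3 ≤ d) (hk : 2*d ≤ kk) (hp : p ≤ 1) :
    (1 - p) * (kk:ℝ)^(d-1) / ((2^(d-1) * (d-2).factorial : ℕ) : ℝ) ≤ lamStar d kk p := by
  have hC : (0:ℝ) < ((2^(d-1) * (d-2).factorial : ℕ) : ℝ) := by
    exact_mod_cast Nat.pos_of_ne_zero (by positivity)
  have h := nat_pow_le_aux d kk hd hk
  have hcast : (kk:ℝ)^(d-1) ≤
      ((2^(d-1) * (d-2).factorial : ℕ) : ℝ) * (((kk:ℝ)-1) * ((kk-2).choose (d-2):ℝ)) := by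
    have h' := (Nat.cast_le (α := ℝ)).mpr h
    push_cast [Nat.cast_sub (show 1 ≤ kk by omega)] at h' ⊢
    linarith [h']
  have h1p : (0:ℝ) ≤ 1 - p := by linarith
  rw [div_le_iff₀ hC]
  calc (1-p)*(kk:ℝ)^(d-1)
      ≤ (1-p)*(((2^(d-1) * (d-2).factorial : ℕ) : ℝ) * (((kk:ℝ)-1) * ((kk-2).choose (d-2):ℝ))) :=
        mul_le_mul_of_nonneg_left hcast h1p
    _ = lamStar d kk p * ((2^(d-1) * (d-2).factorial : ℕ) : ℝ) := by rw [lamStar]; ring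


set_option maxHeartbeats 1000000 in
/-- **λ*-scale.** Under the sparse-regime assumptions, the leading eigenvalue
`λ* = (1−p_n)(k−1)·C(k−2,d−2)` dominates the three fluctuation scales. -/
theorem lamStar_scale (d : ℕ) (hd : 3 ≤ d)
    (p : ℕ → ℝ) (hp : ∀ n, 0 < p n ∧ p n < 1)
    (hsup : ∃ q : ℝ, q < 1 ∧ ∀ n, p n ≤ q)
    (c : ℝ) (hc : 4 * ((d : ℝ) - 1) / (2 * (d : ℝ) - 3) ≤ c)
    (hΩ : ∃ a : ℝ, 0 < a ∧ ∀ᶠ n : ℕ in atTop,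
        a * Real.log n ^ c / (n : ℝ) ^ (d - 1) ≤ p n)
    (k : ℕ → ℕ)
    (hgrow : Tendsto
      (fun n : ℕ => (k n : ℝ) /
        ((p n / (1 - p n)) ^ ((1 : ℝ) / (2 * ((d : ℝ) - 1))) * Real.sqrt n))
      atTop atTop) :
    Tendsto (fun n : ℕ => Real.sqrt (p n * (n : ℝ) ^ (d - 1)) / lamStar d (k n) (p n))
        atTop (𝓝 (0 : ℝ)) ∧
      Tendsto (fun n : ℕ =>
          Real.sqrt (p n * (k n : ℝ) * (n : ℝ) ^ (d - 2) * Real.log n) / lamStar d (k n) (p n))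
        atTop (𝓝 (0 : ℝ)) ∧
      Tendsto (fun n : ℕ => Real.sqrt (k n : ℝ) * Real.log n / lamStar d (k n) (p n))
        atTop (𝓝 (0 : ℝ)) := by
  
  obtain ⟨q, hq1, hpq⟩ := hsup
  obtain ⟨a, ha, haev⟩ := hΩ
  have hd3 : (3:ℝ) ≤ (d:ℝ) := by exact_mod_cast hd
  have hq0 : 0 < q := lt_of_lt_of_le (hp 0).1 (hpq 0)
  have h1q : (0:ℝ) < 1 - q := by linarith
  have hcpos : 0 < c := lt_of_lt_of_le (div_pos (by linarith) (by linarith)) hc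
  set ε : ℝ := (1 : ℝ) / (2 * ((d : ℝ) - 1)) with hεdef
  have hεpos : 0 < ε := by rw [hεdef]; exact div_pos one_pos (by linarith)
  have hε1 : ε ≤ 1 := by rw [hεdef, div_le_one (by linarith)]; linarith
  set D : ℕ := 2*d - 2 with hDdef
  have hDcast : ((D:ℕ):ℝ) = 2*((d:ℝ)-1) := by
    rw [hDdef, Nat.cast_sub (by omega)]; push_cast; ring
  have hεD : ε * (D:ℝ) = 1 := by
    rw [hDcast, hεdef, one_div, inv_mul_cancel₀ (by linarith : (2:ℝ)*((d:ℝ)-1) ≠ 0)]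
  have hDeq : (d-1)*2 = D := by omega
  have hD1cast : ((D-1:ℕ):ℝ) = 2*(d:ℝ)-3 := by
    rw [hDdef]
    have e : 2*d-2-1 = 2*d-3 := by omega
    rw [e, Nat.cast_sub (by omega)]; push_cast; ring
  have hγ : 2 ≤ (c*ε) * ((D-1:ℕ):ℝ) := by
    rw [hD1cast, hεdef]
    have h23 : (0:ℝ) < 2*(d:ℝ)-3 := by linarith
    have h21 : (0:ℝ) < 2*((d:ℝ)-1) := by linarith
    rw [div_le_iff₀ h23] at hc
    have e : c*(1/(2*((d:ℝ)-1)))*(2*(d:ℝ)-3) = c*(2*(d:ℝ)-3)/(2*((d:ℝ)-1)) := by ring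
    rw [e, le_div_iff₀ h21]; linarith
  set C₁ : ℝ := ((2^(d-1) * (d-2).factorial : ℕ) : ℝ) with hC₁def
  have hC₁ : 0 < C₁ := by rw [hC₁def]; exact_mod_cast Nat.pos_of_ne_zero (by positivity)
  set Q' : ℝ := max 1 (q/(1-q)) with hQ'def
  have hQ'1 : 1 ≤ Q' := le_max_left _ _
  set b : ℝ := a ^ ε with hbdef
  have hb : 0 < b := Real.rpow_pos_of_pos ha _
  set A₁ : ℝ := C₁^2/(1-q) with hA₁def
  set A₂ : ℝ := C₁^2*Q'/(1-q) with hA₂def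
  set A₃ : ℝ := C₁^2/((1-q)^2 * b^(D-1)) with hA₃def
  set gfun : ℕ → ℝ := fun n => (k n : ℝ) / ((p n / (1 - p n)) ^ ε * Real.sqrt n) with hgdef
  -- limits of the bounding sequences
  have hsqrt0 : Tendsto Real.sqrt (nhds 0) (nhds 0) := by
    have := Real.continuous_sqrt.tendsto 0
    simpa using this
  have hlim1 : Tendsto (fun n : ℕ => Real.sqrt (A₁ / gfun n)) atTop (nhds 0) :=
    hsqrt0.comp (Tendsto.const_div_atTop hgrow A₁)
  have hlim3 : Tendsto (fun n : ℕ => Real.sqrt (A₃ / gfun n)) atTop (nhds 0) :=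
    hsqrt0.comp (Tendsto.const_div_atTop hgrow A₃)
  have hlim2 : Tendsto (fun n : ℕ => Real.sqrt (A₂ * (Real.log n / Real.sqrt n))) atTop (nhds 0) := by
    have hlog : Tendsto (fun x:ℝ => Real.log x / x^((1:ℝ)/2)) atTop (nhds 0) :=
      (isLittleO_log_rpow_atTop (by norm_num)).tendsto_div_nhds_zero
    have hlogn : Tendsto (fun n:ℕ => Real.log n / Real.sqrt n) atTop (nhds 0) := by
      have h2 := hlog.comp tendsto_natCast_atTop_atTop
      refine h2.congr fun n => ?_
      simp [Function.comp, Real.sqrt_eq_rpow]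
    have h3 := hlogn.const_mul A₂
    rw [mul_zero] at h3
    exact hsqrt0.comp h3
  -- the eventual bounds
  have hM : ∀ᶠ n in atTop, max 1 ((2*(d:ℝ)+1)/b) ≤ gfun n := hgrow.eventually_ge_atTop _
  have hE : ∀ᶠ n : ℕ in atTop,
      (0 ≤ Real.sqrt (p n * (n : ℝ) ^ (d - 1)) / lamStar d (k n) (p n) ∧
        Real.sqrt (p n * (n : ℝ) ^ (d - 1)) / lamStar d (k n) (p n) ≤ Real.sqrt (A₁ / gfun n)) ∧
      (0 ≤ Real.sqrt (p n * (k n : ℝ) * (n : ℝ) ^ (d - 2) * Real.log n) / lamStar d (k n) (p n) ∧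
        Real.sqrt (p n * (k n : ℝ) * (n : ℝ) ^ (d - 2) * Real.log n) / lamStar d (k n) (p n) ≤
          Real.sqrt (A₂ * (Real.log n / Real.sqrt n))) ∧
      (0 ≤ Real.sqrt (k n : ℝ) * Real.log n / lamStar d (k n) (p n) ∧
        Real.sqrt (k n : ℝ) * Real.log n / lamStar d (k n) (p n) ≤ Real.sqrt (A₃ / gfun n)) := by

    filter_upwards [eventually_ge_atTop 3, haev, hM] with n hn3 hpn hgn
    obtain ⟨hp0, hp1⟩ := hp n
    have h1P : 0 < 1 - p n := by linarith
    set R : ℝ := p n / (1 - p n) with hRdef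
    have hR0 : 0 < R := div_pos hp0 h1P
    have hRP : R * (1 - p n) = p n := div_mul_cancel₀ _ h1P.ne'
    have hRq : R ≤ q/(1-q) := div_le_div₀ hq0.le (hpq n) h1q (by linarith [hpq n])
    have hRQ' : R ^ ε ≤ Q' := by
      calc R^ε ≤ Q'^ε := Real.rpow_le_rpow hR0.le (hRq.trans (le_max_right _ _)) hεpos.le
        _ ≤ Q'^(1:ℝ) := Real.rpow_le_rpow_of_exponent_le hQ'1 hε1
        _ = Q' := Real.rpow_one _
    have hn3' : (3:ℝ) ≤ (n:ℝ) := by exact_mod_cast hn3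
    have hn0 : (0:ℝ) < (n:ℝ) := by linarith
    have hsqn : Real.sqrt n * Real.sqrt n = (n:ℝ) := Real.mul_self_sqrt hn0.le
    have hsq0 : 0 < Real.sqrt n := Real.sqrt_pos.mpr hn0
    have hlog1 : 1 ≤ Real.log n := by
      rw [Real.le_log_iff_exp_le hn0]
      calc Real.exp 1 ≤ 2.7182818286 := Real.exp_one_lt_d9.le
        _ ≤ 3 := by norm_num
        _ ≤ (n:ℝ) := hn3'
    have hlog0 : 0 ≤ Real.log n := by linarith
    have hden : 0 < R^ε * Real.sqrt n := by positivity
    have hkeq : (k n : ℝ) = gfun n * (R^ε * Real.sqrt n) := by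
      rw [hgdef]
      exact (div_mul_cancel₀ _ hden.ne').symm
    have hg1 : 1 ≤ gfun n := le_trans (le_max_left _ _) hgn
    have hg0 : 0 < gfun n := by linarith
    have hPlb : a * Real.log n ^ c / (n:ℝ)^(d-1) ≤ R := by
      refine le_trans hpn ?_
      rw [hRdef, le_div_iff₀ h1P]
      calc p n * (1-p n) ≤ p n * 1 := mul_le_mul_of_nonneg_left (by linarith) hp0.le
        _ = p n := mul_one _
    have hNpos : 0 < (n:ℝ)^(d-1) := by positivity
    have hklb : b * Real.log n ^ (c*ε) ≤ R^ε * Real.sqrt n := by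
      have h1 : (a * Real.log n ^ c / (n:ℝ)^(d-1)) ^ ε ≤ R ^ ε :=
        Real.rpow_le_rpow (by positivity) hPlb hεpos.le
      have hd2 : ((d-1:ℕ):ℝ)*ε = 1/2 := by
        rw [Nat.cast_sub (by omega), hεdef]
        push_cast
        rw [mul_one_div, div_eq_div_iff (by linarith) (by norm_num)]
        ring
      have h2 : (a * Real.log n ^ c / (n:ℝ)^(d-1)) ^ ε = b * Real.log n ^ (c*ε) / Real.sqrt n := by
        rw [Real.div_rpow (by positivity) (by positivity),
          Real.mul_rpow ha.le (by positivity), hbdef, ← Real.rpow_mul hlog0,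
          ← Real.rpow_natCast (n:ℝ) (d-1), ← Real.rpow_mul hn0.le, hd2,
          ← Real.sqrt_eq_rpow]
      rw [h2] at h1
      calc b * Real.log n ^ (c*ε) = (b * Real.log n ^ (c*ε) / Real.sqrt n) * Real.sqrt n := by
            field_simp
        _ ≤ R^ε * Real.sqrt n := mul_le_mul_of_nonneg_right h1 hsq0.le
    have hlogγ1 : 1 ≤ Real.log n ^ (c*ε) := by
      calc (1:ℝ) = Real.log n ^ (0:ℝ) := (Real.rpow_zero _).symm
        _ ≤ _ := Real.rpow_le_rpow_of_exponent_le hlog1 (mul_nonneg hcpos.le hεpos.le)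
    have hkb : b * (gfun n * Real.log n ^ (c*ε)) ≤ (k n:ℝ) := by
      rw [hkeq]
      calc b * (gfun n * Real.log n ^ (c*ε)) = gfun n * (b * Real.log n ^ (c*ε)) := by ring
        _ ≤ gfun n * (R^ε * Real.sqrt n) := mul_le_mul_of_nonneg_left hklb hg0.le
    have hK1 : b * gfun n ≤ (k n:ℝ) := by
      refine le_trans ?_ hkb
      have h2 : gfun n * 1 ≤ gfun n * Real.log n ^ (c*ε) :=
        mul_le_mul_of_nonneg_left hlogγ1 hg0.le
      calc b * gfun n = b * (gfun n * 1) := by ring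
        _ ≤ b * (gfun n * Real.log n ^ (c*ε)) := mul_le_mul_of_nonneg_left h2 hb.le
    have hk2d : 2*d ≤ k n := by
      have h1 : (2*(d:ℝ)+1) ≤ b * gfun n := by
        have h2 := le_trans (le_max_right _ _) hgn
        rw [div_le_iff₀ hb] at h2
        linarith
      have h2 : ((2*d:ℕ):ℝ) ≤ (k n:ℝ) := by push_cast; linarith
      exact_mod_cast h2
    have hK0 : (0:ℝ) < (k n:ℝ) := by
      have : 0 < k n := by omega
      exact_mod_cast this
    set L : ℝ := lamStar d (k n) (p n) with hLdef
    have hL : (1 - p n) * (k n:ℝ)^(d-1) / C₁ ≤ L := lamStar_lb hd hk2d hp1.le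
    have hLpos : 0 < L := lt_of_lt_of_le (by positivity) hL
    have hKD : ((k n:ℝ))^D = gfun n ^ D * (R * (n:ℝ)^(d-1)) := by
      rw [hkeq, mul_pow, mul_pow]
      congr 1
      congr 1
      · calc (R^ε)^D = (R^ε)^((D:ℕ):ℝ) := (Real.rpow_natCast _ D).symm
          _ = R^(ε*(D:ℝ)) := by rw [← Real.rpow_mul hR0.le]
          _ = R^(1:ℝ) := by rw [hεD]
          _ = R := Real.rpow_one _
      · calc Real.sqrt n ^ D = Real.sqrt n ^ ((d-1)*2) := by rw [hDeq]
          _ = (Real.sqrt n ^ 2)^(d-1) := by rw [pow_mul']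
          _ = (n:ℝ)^(d-1) := by rw [Real.sq_sqrt hn0.le]
    have hL2 : (1-p n)^2 * (k n:ℝ)^D / C₁^2 ≤ L^2 := by
      have h := pow_le_pow_left₀ (by positivity) hL 2
      calc (1-p n)^2 * (k n:ℝ)^D / C₁^2 = ((1-p n)*(k n:ℝ)^(d-1)/C₁)^2 := by
            rw [div_pow, mul_pow, ← pow_mul, hDeq]
        _ ≤ L^2 := h
    have hT0 : 0 < (1-p n)^2*(k n:ℝ)^D/C₁^2 := by positivity
    have hstep : ∀ X : ℝ, 0 ≤ X → X / L^2 ≤ C₁^2 * X / ((1-p n)^2 * (k n:ℝ)^D) := by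
      intro X hX
      calc X / L^2 ≤ X / ((1-p n)^2*(k n:ℝ)^D/C₁^2) :=
            div_le_div_of_nonneg_left hX hT0 hL2
        _ = C₁^2 * X / ((1-p n)^2 * (k n:ℝ)^D) := by
            rw [div_div_eq_mul_div]; ring
    -- Part 1
    have hX1 : (0:ℝ) ≤ p n * (n:ℝ)^(d-1) := by positivity
    have hub1 : p n * (n:ℝ)^(d-1) / L^2 ≤ A₁ / gfun n := by
      refine le_trans (hstep _ hX1) ?_
      rw [hKD]
      have e1 : C₁^2*(p n*(n:ℝ)^(d-1))/((1-p n)^2*(gfun n^D*(R*(n:ℝ)^(d-1)))) =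
          C₁^2/((1-p n)*gfun n^D) := by
        rw [div_eq_div_iff (by positivity) (by positivity)]
        linear_combination (-(C₁^2*(n:ℝ)^(d-1)*gfun n^D*(1-p n))) * hRP
      rw [e1]
      calc C₁^2/((1-p n)*gfun n^D) ≤ C₁^2/((1-q)*gfun n) := by
            apply div_le_div_of_nonneg_left (by positivity) (by positivity)
            exact mul_le_mul (by linarith [hpq n]) (le_self_pow₀ hg1 (by omega)) hg0.le
              (by linarith)
        _ = A₁/gfun n := by rw [hA₁def, div_div]
    have hnn1 : 0 ≤ Real.sqrt (p n * (n:ℝ)^(d-1)) / L :=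
      div_nonneg (Real.sqrt_nonneg _) hLpos.le
    have hle1 : Real.sqrt (p n * (n:ℝ)^(d-1)) / L ≤ Real.sqrt (A₁ / gfun n) := by
      rw [← Real.sqrt_sq hLpos.le, ← Real.sqrt_div hX1]
      exact Real.sqrt_le_sqrt hub1
    -- Part 2
    have hX2 : (0:ℝ) ≤ p n * (k n:ℝ) * (n:ℝ)^(d-2) * Real.log n := by positivity
    have hN : (n:ℝ)^(d-1) = (n:ℝ)^(d-2)*(n:ℝ) := by
      rw [← pow_succ]
      congr 1
      omega
    have key2 : gfun n * R^ε ≤ Q'*((1-p n)*gfun n^D)/(1-q) := by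
      rw [le_div_iff₀ h1q]
      calc gfun n * R^ε * (1-q) ≤ gfun n * R^ε * (1-p n) :=
            mul_le_mul_of_nonneg_left (by linarith [hpq n]) (by positivity)
        _ ≤ (gfun n^D * Q') * (1-p n) := by
            apply mul_le_mul_of_nonneg_right _ h1P.le
            exact mul_le_mul (le_self_pow₀ hg1 (by omega)) hRQ' (by positivity) (by positivity)
        _ = Q'*((1-p n)*gfun n^D) := by ring
    have hub2 : p n * (k n:ℝ) * (n:ℝ)^(d-2) * Real.log n / L^2 ≤ A₂ * (Real.log n/Real.sqrt n) := by
      refine le_trans (hstep _ hX2) ?_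
      rw [hKD, hkeq, hN]
      rw [show A₂ * (Real.log n/Real.sqrt n) = A₂*Real.log n/Real.sqrt n by ring]
      rw [div_le_div_iff₀ (by positivity) hsq0]
      calc C₁^2*(p n*(gfun n*(R^ε*Real.sqrt n))*(n:ℝ)^(d-2)*Real.log n)*Real.sqrt n
          = (C₁^2*p n*((n:ℝ)^(d-2)*(Real.sqrt n*Real.sqrt n))*Real.log n)*(gfun n*R^ε) := by
            ring
        _ = (C₁^2*p n*((n:ℝ)^(d-2)*(n:ℝ))*Real.log n)*(gfun n*R^ε) := by rw [hsqn]
        _ ≤ (C₁^2*p n*((n:ℝ)^(d-2)*(n:ℝ))*Real.log n)*(Q'*((1-p n)*gfun n^D)/(1-q)) :=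
            mul_le_mul_of_nonneg_left key2 (by positivity)
        _ = A₂*Real.log n*((1-p n)^2*(gfun n^D*(R*((n:ℝ)^(d-2)*(n:ℝ))))) := by
            rw [hA₂def]
            linear_combination
              (-(C₁^2*Q'*Real.log n*gfun n^D*((n:ℝ)^(d-2)*(n:ℝ))*(1-p n))/(1-q)) * hRP
    have hnn2 : 0 ≤ Real.sqrt (p n * (k n:ℝ) * (n:ℝ)^(d-2) * Real.log n) / L :=
      div_nonneg (Real.sqrt_nonneg _) hLpos.le
    have hle2 : Real.sqrt (p n * (k n:ℝ) * (n:ℝ)^(d-2) * Real.log n) / L ≤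
        Real.sqrt (A₂ * (Real.log n/Real.sqrt n)) := by
      rw [← Real.sqrt_sq hLpos.le, ← Real.sqrt_div hX2]
      exact Real.sqrt_le_sqrt hub2
    -- Part 3
    have hX3 : (0:ℝ) ≤ (k n:ℝ)*(Real.log n)^2 := by positivity
    have hKD' : (k n:ℝ)^D = (k n:ℝ)^(D-1)*(k n:ℝ) := by
      rw [← pow_succ]
      congr 1
      omega
    have hlogpow : Real.log n^(2:ℕ) ≤ (Real.log n^(c*ε))^(D-1) := by
      rw [← Real.rpow_natCast (Real.log n^(c*ε)) (D-1), ← Real.rpow_mul hlog0,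
        ← Real.rpow_natCast (Real.log n) 2]
      apply Real.rpow_le_rpow_of_exponent_le hlog1
      push_cast
      exact hγ
    have keyK : b^(D-1)*(gfun n*(Real.log n)^2) ≤ (k n:ℝ)^(D-1) := by
      calc b^(D-1)*(gfun n*(Real.log n)^2)
          ≤ b^(D-1)*(gfun n^(D-1)*(Real.log n^(c*ε))^(D-1)) := by
            apply mul_le_mul_of_nonneg_left _ (by positivity)
            exact mul_le_mul (le_self_pow₀ hg1 (by omega)) hlogpow (by positivity) (by positivity)
        _ = (b*(gfun n*Real.log n^(c*ε)))^(D-1) := by rw [mul_pow, mul_pow]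
        _ ≤ (k n:ℝ)^(D-1) := pow_le_pow_left₀ (by positivity) hkb _
    have hub3 : (k n:ℝ)*(Real.log n)^2 / L^2 ≤ A₃ / gfun n := by
      refine le_trans (hstep _ hX3) ?_
      rw [hKD']
      have e3 : C₁^2*((k n:ℝ)*(Real.log n)^2)/((1-p n)^2*((k n:ℝ)^(D-1)*(k n:ℝ))) =
          C₁^2*(Real.log n)^2/((1-p n)^2*(k n:ℝ)^(D-1)) := by
        rw [div_eq_div_iff (by positivity) (by positivity)]
        ring
      rw [e3, div_le_div_iff₀ (by positivity) hg0]
      calc C₁^2*(Real.log n)^2*gfun n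
          = (C₁^2/((1-q)^2*b^(D-1)))*((1-q)^2*(b^(D-1)*(gfun n*(Real.log n)^2))) := by
            field_simp
        _ ≤ A₃*((1-p n)^2*(k n:ℝ)^(D-1)) := by
            rw [hA₃def]
            apply mul_le_mul_of_nonneg_left _ (by positivity)
            have hqp2 : (1-q)^2 ≤ (1-p n)^2 := pow_le_pow_left₀ h1q.le (by linarith [hpq n]) 2
            exact mul_le_mul hqp2 keyK (by positivity) (by positivity)
    have hnn3 : 0 ≤ Real.sqrt (k n:ℝ) * Real.log n / L :=
      div_nonneg (mul_nonneg (Real.sqrt_nonneg _) hlog0) hLpos.le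
    have hle3 : Real.sqrt (k n:ℝ) * Real.log n / L ≤ Real.sqrt (A₃ / gfun n) := by
      have e : Real.sqrt (k n:ℝ) * Real.log n = Real.sqrt ((k n:ℝ)*(Real.log n)^2) := by
        rw [Real.sqrt_mul hK0.le, Real.sqrt_sq hlog0]
      rw [e, ← Real.sqrt_sq hLpos.le, ← Real.sqrt_div hX3]
      exact Real.sqrt_le_sqrt hub3
    exact ⟨⟨hnn1, hle1⟩, ⟨hnn2, hle2⟩, ⟨hnn3, hle3⟩⟩

  refine ⟨squeeze_zero' (hE.mono fun n h => h.1.1) (hE.mono fun n h => h.1.2) hlim1,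
    squeeze_zero' (hE.mono fun n h => h.2.1.1) (hE.mono fun n h => h.2.1.2) hlim2,
    squeeze_zero' (hE.mono fun n h => h.2.2.1) (hE.mono fun n h => h.2.2.2) hlim3⟩
end

section
/- Fix integers d ≥ 3, n ≥ d, p ∈ [0,1], and deterministic sets T ⊆ S ⊆ [n] with |T| = k₀ ≥ 1 and |S| = k. Let P_S and P_T denote the laws of the adjacency matrix A under the hypergraph planted clique model conditional on the planted set being S and T, respectively, and set M := A − E₀[A] and u_T := 1_T/√k₀. Then for every t ∈ ℝ: P_S(‖M‖ ≤ t) ≤ P_T(⟨u_T, M u_T⟩ ≤ t). -/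
open MeasureTheory Filter Finset Matrix
open scoped ENNReal

open HPC MeasureTheory Matrix

/-! Couple the two models: from a configuration with planted set `T`, switching on every
hyperedge inside `S ⊇ T` produces a configuration with planted set `S`. This only adds
hyperedges, so it can only increase `⟨u_T, M u_T⟩` (all entries of `u_T` are nonnegative), and
the quadratic form of a vector of norm at most one is bounded by the spectral norm. -/

lemma Matrix.dotProduct_mulVec_mono {ι : Type*} [Fintype ι] {u : ι → ℝ} (hu : 0 ≤ u)
    {A B : Matrix ι ι ℝ} (hAB : ∀ i j, A i j ≤ B i j) : u ⬝ᵥ A *ᵥ u ≤ u ⬝ᵥ B *ᵥ u :=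
  Finset.sum_le_sum fun i _ => mul_le_mul_of_nonneg_left
    (Finset.sum_le_sum fun j _ => mul_le_mul_of_nonneg_right (hAB i j) (hu j)) (hu i)

namespace HPC

variable {n d : ℕ}

lemma dotProduct_mulVec_le_specNorm (M : Matrix (Fin n) (Fin n) ℝ) {u : Fin n → ℝ}
    (hu : norm2 u ≤ 1) : u ⬝ᵥ M *ᵥ u ≤ specNorm M := by
  set L := LinearMap.toContinuousLinearMap (Matrix.toEuclideanLin M)
  set v : EuclideanSpace ℝ (Fin n) := WithLp.toLp 2 u
  have hv : ‖v‖ ≤ 1 := by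
    simpa [EuclideanSpace.norm_eq, norm2, v, Real.norm_eq_abs, sq_abs] using hu
  have hquad : u ⬝ᵥ M *ᵥ u = inner ℝ v (L v) := by
    simp [L, v, PiLp.inner_apply, dotProduct, mul_comm]
  calc u ⬝ᵥ M *ᵥ u = inner ℝ v (L v) := hquad
    _ ≤ ‖v‖ * (‖L‖ * ‖v‖) :=
        (real_inner_le_norm _ _).trans (mul_le_mul_of_nonneg_left (L.le_opNorm v) (norm_nonneg _))
    _ ≤ 1 * (‖L‖ * 1) := by gcongr
    _ = specNorm M := by rw [specNorm]; ring

lemma uInd_nonneg (T : Finset (Fin n)) : 0 ≤ uInd T := fun i => by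
  unfold uInd
  split <;> positivity

lemma norm2_uInd_le_one (T : Finset (Fin n)) : norm2 (uInd T) ≤ 1 := by
  refine Real.sqrt_le_one.mpr ?_
  simp only [uInd, ite_pow, inv_pow, Real.sq_sqrt (Nat.cast_nonneg _), zero_pow two_ne_zero,
    Finset.sum_ite_mem, Finset.univ_inter, Finset.sum_const, nsmul_eq_mul]
  exact mul_inv_le_one

lemma adj_apply_mono {H H' : Config n d} (h : H ≤ H') (i j : Fin n) :
    adj n d H i j ≤ adj n d H' i j := by
  simp only [adj, of_apply]
  split
  · rfl
  · refine Finset.sum_le_sum fun e _ => ?_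
    by_cases he : i ∈ (e : Finset (Fin n)) ∧ j ∈ (e : Finset (Fin n)) ∧ H e = true
    · rw [if_pos he, if_pos ⟨he.1, he.2.1, Bool.le_iff_imp.mp (h e) he.2.2⟩]
    · rw [if_neg he]
      split <;> norm_num

lemma isProbabilityMeasure_bern {p : ℝ} (hp : p ∈ Set.Icc (0 : ℝ) 1) :
    IsProbabilityMeasure (bern p) := by
  constructor
  simp only [bern, Measure.coe_add, Measure.coe_smul, Pi.add_apply, Pi.smul_apply,
    measure_univ, smul_eq_mul, mul_one]
  rw [← ENNReal.ofReal_add hp.1 (by linarith [hp.2])]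
  norm_num

lemma isProbabilityMeasure_edgeLaw {p : ℝ} (hp : p ∈ Set.Icc (0 : ℝ) 1) (S : Finset (Fin n))
    (e : Edge n d) : IsProbabilityMeasure (edgeLaw n d p S e) := by
  unfold edgeLaw
  split
  · infer_instance
  · exact isProbabilityMeasure_bern hp

def plant (S : Finset (Fin n)) (H : Config n d) : Config n d :=
  fun e => H e || decide ((e : Finset (Fin n)) ⊆ S)

lemma le_plant (S : Finset (Fin n)) (H : Config n d) : H ≤ plant S H :=
  fun _ => Bool.left_le_or _ _

lemma measurePreserving_edgeLaw {p : ℝ} (hp : p ∈ Set.Icc (0 : ℝ) 1)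
    {T S : Finset (Fin n)} (hTS : T ⊆ S) (e : Edge n d) :
    MeasurePreserving (fun b => b || decide ((e : Finset (Fin n)) ⊆ S))
      (edgeLaw n d p T e) (edgeLaw n d p S e) := by
  refine ⟨.of_discrete, ?_⟩
  by_cases heS : (e : Finset (Fin n)) ⊆ S
  · have := isProbabilityMeasure_edgeLaw hp T e
    simp only [heS, decide_true, Bool.or_true, Measure.map_const, measure_univ, one_smul]
    simp only [edgeLaw, if_pos heS]
  · have heT : ¬ (e : Finset (Fin n)) ⊆ T := fun h => heS (h.trans hTS)
    simp only [heS, decide_false, Bool.or_false, Measure.map_id', edgeLaw, if_false, heT]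

lemma measurePreserving_plant {p : ℝ} (hp : p ∈ Set.Icc (0 : ℝ) 1)
    {T S : Finset (Fin n)} (hTS : T ⊆ S) :
    MeasurePreserving (plant (d := d) S) (condLaw n d p T) (condLaw n d p S) := by
  have := fun e => isProbabilityMeasure_edgeLaw (d := d) hp S e
  exact measurePreserving_pi _ _ (measurePreserving_edgeLaw hp hTS)

end HPC

theorem coupling_lemma_general (n d : ℕ)
    (p : ℝ) (hp : p ∈ Set.Icc (0 : ℝ) 1)
    (T S : Finset (Fin n)) (hTS : T ⊆ S)
    (t : ℝ) :
    condLaw n d p S {H | specNorm (centered n d p H) ≤ t}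
      ≤ condLaw n d p T
          {H | uInd T ⬝ᵥ (centered n d p H).mulVec (uInd T) ≤ t} := by
  rw [← (measurePreserving_plant hp hTS).map_eq, Measure.map_apply .of_discrete .of_discrete]
  refine measure_mono fun H hH => ?_
  calc uInd T ⬝ᵥ centered n d p H *ᵥ uInd T
      ≤ uInd T ⬝ᵥ centered n d p (plant S H) *ᵥ uInd T :=
        dotProduct_mulVec_mono (uInd_nonneg T) fun i j =>
          sub_le_sub_right (adj_apply_mono (le_plant S H) i j) _
    _ ≤ specNorm (centered n d p (plant S H)) :=
        dotProduct_mulVec_le_specNorm _ (norm2_uInd_le_one T)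
    _ ≤ t := hH

/-- **Coupling lemma.** For planted sets `T ⊆ S`,
`P_S(‖M‖ ≤ t) ≤ P_T(⟨u_T, M u_T⟩ ≤ t)` for every `t`. -/
theorem coupling_lemma (n d : ℕ) (hd : 3 ≤ d) (hn : d ≤ n)
    (p : ℝ) (hp : p ∈ Set.Icc (0 : ℝ) 1)
    (T S : Finset (Fin n)) (hTS : T ⊆ S)
    (k₀ k : ℕ) (hT : T.card = k₀) (hk₀ : 1 ≤ k₀) (hS : S.card = k)
    (t : ℝ) :
    condLaw n d p S {H | specNorm (centered n d p H) ≤ t}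
      ≤ condLaw n d p T
          {H | uInd T ⬝ᵥ (centered n d p H).mulVec (uInd T) ≤ t} :=
  coupling_lemma_general n d p hp T S hTS t
end

section
/- Fix d ≥ 3, p ∈ (0,1), a constant C > 0, and δ ∈ (0,1). Set κ := (2C·√((d−2)!)·√p/(1−p))^{1/(d−1)}, k₀ = k₀(n) := ⌊κ√n⌋ + 1, t₁ := C·√(n·C(n−2,d−2)·p), ℓ := log(4/δ), s(n,k₀) := (1−p)(k₀−1)·C(k₀−2,d−2), U_d := (d−1)(d−2), and V(n,k₀) := p(1−p)·Σ_{e ⊄ T} c_e(T)² for any set T ⊆ [n] with |T| = k₀, where c_e(T) := |e ∩ T|(|e ∩ T| − 1) and the sum runs over d-subsets e of [n] not contained in T. Then for all sufficiently large n: s(n,k₀) − (1/k₀)·[ √(2·V(n,k₀)·ℓ) + (2/3)·U_d·ℓ ] > t₁. -/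
open MeasureTheory Filter Finset Matrix
open scoped ENNReal

open HPC MeasureTheory Filter Finset Matrix
open scoped ENNReal Topology

/-!
Write `x = √n`, so that `k = ⌊κ x⌋ + 1`. Every term is then compared with a polynomial in `x`:
the threshold is at most `c x^(d-1)` with `c = C √p / √((d-2)!)`, because
`C(n-2, d-2) ≤ n^(d-2) / (d-2)!`; the signal is at least `(1-p)/(d-2)! · (κx - 1)(κx - d)^(d-2)`,
because `C(m, r) ≥ (m+1-r)^r / r!`; and the fluctuation term is `O(x^(d-2))`, because
`c_e(T) ≤ d(d-1)` and double counting over ordered pairs of `T` gives `Σ_e c_e(T) ≤ k² n^(d-2)`.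
The choice of `κ` makes the leading coefficient `(1-p) κ^(d-1) / (d-2)!` of the signal equal to
`2c`, twice that of the threshold.
-/

namespace HPC

open scoped Nat

lemma card_filter_mem_mem_le_choose {α : Type*} [Fintype α] [DecidableEq α] {d : ℕ}
    {F : Finset (Finset α)} (hF : ∀ e ∈ F, e.card = d) {i j : α} (hij : i ≠ j) :
    (F.filter fun e => i ∈ e ∧ j ∈ e).card ≤ (Fintype.card α - 2).choose (d - 2) := by
  have hsub : F.filter (fun e => i ∈ e ∧ j ∈ e) ⊆
      ((univ \ {i, j}).powersetCard (d - 2)).image (· ∪ {i, j}) := by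
    intro e he
    obtain ⟨heF, hi, hj⟩ := mem_filter.1 he
    have hij_sub : ({i, j} : Finset α) ⊆ e := insert_subset hi (singleton_subset_iff.2 hj)
    refine mem_image.2 ⟨e \ {i, j}, mem_powersetCard.2 ⟨sdiff_subset_sdiff (subset_univ _) le_rfl, ?_⟩,
      sdiff_union_of_subset hij_sub⟩
    rw [card_sdiff_of_subset hij_sub, hF e heF, card_pair hij]
  calc (F.filter fun e => i ∈ e ∧ j ∈ e).card ≤ _ := card_le_card hsub
    _ ≤ ((univ \ {i, j}).powersetCard (d - 2)).card := card_image_le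
    _ = (Fintype.card α - 2).choose (d - 2) := by
      rw [card_powersetCard, card_univ_sdiff, card_pair hij]

lemma cE_eq_card_offDiag {n : ℕ} (e T : Finset (Fin n)) :
    cE e T = ((e ∩ T).offDiag.card : ℝ) := by
  rw [cE, offDiag_card, Nat.cast_sub (Nat.le_mul_self _)]
  push_cast
  ring

lemma cE_nonneg {n : ℕ} (e T : Finset (Fin n)) : 0 ≤ cE e T := by
  rw [cE_eq_card_offDiag]; positivity

lemma cE_le {n d : ℕ} {e : Finset (Fin n)} (he : e.card = d) (T : Finset (Fin n)) :
    cE e T ≤ d * (d - 1) := by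
  have h : (e ∩ T).offDiag.card ≤ d * d - d := by
    rw [← he, ← offDiag_card]; exact card_le_card (offDiag_mono inter_subset_left)
  rw [cE_eq_card_offDiag]
  calc ((e ∩ T).offDiag.card : ℝ) ≤ ((d * d - d : ℕ) : ℝ) := by exact_mod_cast h
    _ = d * (d - 1) := by rw [Nat.cast_sub (Nat.le_mul_self _)]; push_cast; ring

lemma sum_card_offDiag_inter_eq {α : Type*} [DecidableEq α] (F : Finset (Finset α))
    (T : Finset α) : ∑ e ∈ F, (e ∩ T).offDiag.card =
      ∑ ij ∈ T.offDiag, (F.filter fun e => ij.1 ∈ e ∧ ij.2 ∈ e).card := by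
  have h : ∀ e : Finset α, (e ∩ T).offDiag = T.offDiag.filter fun ij => ij.1 ∈ e ∧ ij.2 ∈ e := by
    intro e; ext ij; simp only [mem_offDiag, mem_filter, mem_inter]; tauto
  simp only [h, card_filter]
  exact sum_comm

lemma sum_cE_le {n d : ℕ} {F : Finset (Finset (Fin n))} (hF : ∀ e ∈ F, e.card = d)
    (T : Finset (Fin n)) : ∑ e ∈ F, cE e T ≤ (T.card : ℝ) ^ 2 * n ^ (d - 2) := by
  have hnat : ∑ e ∈ F, (e ∩ T).offDiag.card ≤ T.card ^ 2 * n ^ (d - 2) := by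
    rw [sum_card_offDiag_inter_eq]
    calc ∑ ij ∈ T.offDiag, (F.filter fun e => ij.1 ∈ e ∧ ij.2 ∈ e).card
        ≤ ∑ _ij ∈ T.offDiag, n ^ (d - 2) := sum_le_sum fun ij hij =>
          (card_filter_mem_mem_le_choose hF (mem_offDiag.1 hij).2.2).trans <| by
            rw [Fintype.card_fin]
            exact (Nat.choose_le_pow _ _).trans (Nat.pow_le_pow_left (Nat.sub_le _ _) _)
      _ ≤ T.card ^ 2 * n ^ (d - 2) := by
        rw [sum_const, offDiag_card, smul_eq_mul, sq]
        exact Nat.mul_le_mul_right _ (Nat.sub_le _ _)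
  simp only [cE_eq_card_offDiag]
  exact_mod_cast hnat

lemma sum_cE_sq_le {n d : ℕ} {F : Finset (Finset (Fin n))} (hF : ∀ e ∈ F, e.card = d)
    (T : Finset (Fin n)) :
    ∑ e ∈ F, cE e T ^ 2 ≤ d * (d - 1) * ((T.card : ℝ) ^ 2 * n ^ (d - 2)) :=
  calc ∑ e ∈ F, cE e T ^ 2 ≤ ∑ e ∈ F, d * (d - 1) * cE e T :=
        sum_le_sum fun e he => by
          rw [sq]; exact mul_le_mul_of_nonneg_right (cE_le (hF e he) T) (cE_nonneg e T)
    _ ≤ d * (d - 1) * ((T.card : ℝ) ^ 2 * n ^ (d - 2)) := by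
      rw [← mul_sum]
      have hd : (0 : ℝ) ≤ d * (d - 1) := by
        rcases d with _ | d
        · simp
        · rw [Nat.cast_succ, add_sub_cancel_right]; positivity
      exact mul_le_mul_of_nonneg_left (sum_cE_le hF T) hd

lemma fluctuation_le {n d : ℕ} {q ℓ B : ℝ} (hq : 0 ≤ q) (hℓ : 0 ≤ ℓ) (hB : 0 ≤ B)
    {F : Finset (Finset (Fin n))} (hF : ∀ e ∈ F, e.card = d) {T : Finset (Fin n)}
    (hT : T.Nonempty) :
    (T.card : ℝ)⁻¹ * (√(2 * (q * ∑ e ∈ F, cE e T ^ 2) * ℓ) + B) ≤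
      √(2 * (q * (d * (d - 1))) * ℓ) * √n ^ (d - 2) + B := by
  have hk : (1 : ℝ) ≤ T.card := by exact_mod_cast hT.card_pos
  have hroot : √(2 * (q * ∑ e ∈ F, cE e T ^ 2) * ℓ) ≤
      √(2 * (q * (d * (d - 1))) * ℓ) * (T.card * √n ^ (d - 2)) := by
    rw [← Real.sqrt_sq (by positivity : 0 ≤ (T.card : ℝ) * √n ^ (d - 2)),
      ← Real.sqrt_mul' _ (sq_nonneg _)]
    refine Real.sqrt_le_sqrt ?_
    have hn : (√n ^ (d - 2)) ^ 2 = (n : ℝ) ^ (d - 2) := by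
      rw [← pow_mul, mul_comm, pow_mul, Real.sq_sqrt n.cast_nonneg]
    calc 2 * (q * ∑ e ∈ F, cE e T ^ 2) * ℓ
        ≤ 2 * (q * (d * (d - 1) * ((T.card : ℝ) ^ 2 * n ^ (d - 2)))) * ℓ := by
          gcongr; exact sum_cE_sq_le hF T
      _ = 2 * (q * (d * (d - 1))) * ℓ * ((T.card : ℝ) * √n ^ (d - 2)) ^ 2 := by
          rw [mul_pow, hn]; ring
  rw [inv_mul_le_iff₀ (by positivity)]
  nlinarith

lemma threshold_le {n d : ℕ} {C p : ℝ} (hC : 0 ≤ C) (hp : 0 ≤ p) :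
    C * √(n * (n - 2).choose (d - 2) * p) ≤ C * √p / √(d - 2)! * √n ^ (d - 2 + 1) := by
  have hchoose : ((n - 2).choose (d - 2) : ℝ) ≤ (n : ℝ) ^ (d - 2) / (d - 2)! :=
    (Nat.choose_le_pow_div _ _).trans <| by gcongr; exact_mod_cast Nat.sub_le n 2
  have hsq : (n : ℝ) * (n - 2).choose (d - 2) * p ≤ (√p / √(d - 2)! * √n ^ (d - 2 + 1)) ^ 2 := by
    have hn : (√n ^ (d - 2 + 1)) ^ 2 = (n : ℝ) ^ (d - 2 + 1) := by
      rw [← pow_mul, mul_comm, pow_mul, Real.sq_sqrt n.cast_nonneg]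
    rw [mul_pow, div_pow, Real.sq_sqrt hp, Real.sq_sqrt (by positivity), hn, pow_succ]
    calc (n : ℝ) * (n - 2).choose (d - 2) * p ≤ n * ((n : ℝ) ^ (d - 2) / (d - 2)!) * p := by
          gcongr
      _ = p / (d - 2)! * (n ^ (d - 2) * n) := by ring
  calc C * √(n * (n - 2).choose (d - 2) * p)
      ≤ C * (√p / √(d - 2)! * √n ^ (d - 2 + 1)) := by
        gcongr; exact Real.sqrt_le_iff.2 ⟨by positivity, hsq⟩
    _ = C * √p / √(d - 2)! * √n ^ (d - 2 + 1) := by ring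

lemma le_signal {d k : ℕ} {p y : ℝ} (hp : p ≤ 1) (hd : 2 ≤ d) (hdy : d ≤ y) (hyk : y < k) :
    (1 - p) / (d - 2)! * (y - 1) * (y - d) ^ (d - 2) ≤
      (1 - p) * ((k : ℝ) - 1) * ((k - 2).choose (d - 2) : ℝ) := by
  have hdk : d < k := by exact_mod_cast hdy.trans_lt hyk
  have hidx : ((k - 2 + 1 - (d - 2) : ℕ) : ℝ) = k - d + 1 := by
    rw [show k - 2 + 1 - (d - 2) = k - d + 1 by omega]; push_cast [Nat.cast_sub hdk.le]; ring
  have hchoose : (y - d) ^ (d - 2) / (d - 2)! ≤ ((k - 2).choose (d - 2) : ℝ) := by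
    refine le_trans ?_ (Nat.pow_le_choose (d - 2) (k - 2))
    rw [hidx]
    gcongr
    linarith
  have h1p : 0 ≤ 1 - p := by linarith
  calc (1 - p) / (d - 2)! * (y - 1) * (y - d) ^ (d - 2)
      = (1 - p) * (y - 1) * ((y - d) ^ (d - 2) / (d - 2)!) := by ring
    _ ≤ (1 - p) * ((k : ℝ) - 1) * ((k - 2).choose (d - 2) : ℝ) := by
      have : (2 : ℝ) ≤ d := by exact_mod_cast hd
      refine mul_le_mul (mul_le_mul_of_nonneg_left (by linarith) h1p) hchoose ?_ ?_
      · exact div_nonneg (pow_nonneg (by linarith) _) (by positivity)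
      · exact mul_nonneg h1p (by linarith)

lemma rpow_one_div_sub_one_pow {q : ℝ} (hq : 0 ≤ q) {d : ℕ} (hd : 2 ≤ d) :
    (q ^ ((1 : ℝ) / ((d : ℝ) - 1))) ^ (d - 2 + 1) = q := by
  have hcast : (d : ℝ) - 1 = ((d - 2 + 1 : ℕ) : ℝ) := by push_cast [Nat.cast_sub hd]; ring
  rw [hcast, one_div]
  exact Real.rpow_inv_natCast_pow hq (Nat.succ_ne_zero _)

lemma eventually_lt_of_lt_leadingCoeff (r : ℕ) {A a c u v B₁ B₂ : ℝ} (h : c < A * a ^ (r + 1)) :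
    ∀ᶠ x : ℝ in atTop,
      c * x ^ (r + 1) + B₁ * x ^ r + B₂ < A * (a * x - u) * (a * x - v) ^ r := by
  have hinv : Tendsto (fun x : ℝ => x⁻¹) atTop (𝓝 0) := tendsto_inv_atTop_zero
  have hfactor : ∀ w : ℝ, Tendsto (fun x : ℝ => a - w * x⁻¹) atTop (𝓝 a) := fun w => by
    simpa using tendsto_const_nhds.sub (hinv.const_mul w)
  have hlim : Tendsto (fun x : ℝ => A * (a - u * x⁻¹) * (a - v * x⁻¹) ^ r - B₁ * x⁻¹ -
      B₂ * x⁻¹ ^ (r + 1)) atTop (𝓝 (A * a ^ (r + 1))) := by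
    have := ((((hfactor u).const_mul A).mul ((hfactor v).pow r)).sub (hinv.const_mul B₁)).sub
      ((hinv.pow (r + 1)).const_mul B₂)
    simpa [pow_succ, mul_assoc, mul_comm, mul_left_comm] using this
  filter_upwards [hlim.eventually_const_lt h, eventually_gt_atTop 0] with x hx hx0
  have hcancel : ∀ w : ℝ, (a - w * x⁻¹) * x = a * x - w := fun w => by field_simp
  have hscale : (A * (a - u * x⁻¹) * (a - v * x⁻¹) ^ r - B₁ * x⁻¹ - B₂ * x⁻¹ ^ (r + 1)) *
      x ^ (r + 1) = A * (a * x - u) * (a * x - v) ^ r - B₁ * x ^ r - B₂ := by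
    calc _ = A * ((a - u * x⁻¹) * x) * ((a - v * x⁻¹) * x) ^ r - B₁ * (x⁻¹ * x) * x ^ r -
          B₂ * (x⁻¹ * x) ^ (r + 1) := by rw [mul_pow (a - v * x⁻¹) x r]; ring
      _ = _ := by rw [hcancel, hcancel, inv_mul_cancel₀ hx0.ne']; ring
  have := mul_lt_mul_of_pos_right hx (pow_pos hx0 (r + 1))
  rw [hscale] at this
  linarith

end HPC

/-- **Signal dominates the threshold.** With `k₀(n) = ⌊κ√n⌋ + 1`, for all sufficiently
large `n` the signal term exceeds the test threshold `t₁` plus the fluctuation terms. -/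
theorem signal_dominates_threshold (d : ℕ) (hd : 3 ≤ d)
    (p : ℝ) (hp0 : 0 < p) (hp1 : p < 1)
    (C : ℝ) (hC : 0 < C) (δ : ℝ) (hδ0 : 0 < δ) (hδ1 : δ < 1) :
    ∀ᶠ n : ℕ in atTop, ∀ T : Finset (Fin n),
      T.card =
          ⌊(2 * C * Real.sqrt ((d - 2).factorial : ℝ) * Real.sqrt p / (1 - p)) ^
              ((1 : ℝ) / ((d : ℝ) - 1)) * Real.sqrt n⌋₊ + 1 →
      C * Real.sqrt ((n : ℝ) * ((n - 2).choose (d - 2) : ℝ) * p) <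
        (1 - p) * ((T.card : ℝ) - 1) * ((T.card - 2).choose (d - 2) : ℝ) -
          (T.card : ℝ)⁻¹ *
            (Real.sqrt (2 *
                  (p * (1 - p) *
                    ∑ e ∈ (univ : Finset (Finset (Fin n))).filter
                        (fun e => e.card = d ∧ ¬ e ⊆ T), cE e T ^ 2) *
                  Real.log (4 / δ)) +
              2 / 3 * (((d : ℝ) - 1) * ((d : ℝ) - 2)) * Real.log (4 / δ)) := by
  set q := 2 * C * Real.sqrt ((d - 2).factorial : ℝ) * Real.sqrt p / (1 - p)
  set κ := q ^ ((1 : ℝ) / ((d : ℝ) - 1))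
  set ℓ := Real.log (4 / δ)
  have h1p : 0 < 1 - p := by linarith
  have hdR : (3 : ℝ) ≤ d := by exact_mod_cast hd
  have hq : 0 < q := by positivity
  have hκ : 0 < κ := Real.rpow_pos_of_pos hq _
  have hℓ : 0 ≤ ℓ := (Real.log_pos (by rw [lt_div_iff₀ hδ0]; linarith)).le
  have hU : 0 ≤ 2 / 3 * (((d : ℝ) - 1) * ((d : ℝ) - 2)) * ℓ :=
    mul_nonneg (mul_nonneg (by norm_num) (by nlinarith)) hℓ
  have hlead : C * √p / √(d - 2).factorial < (1 - p) / (d - 2).factorial * κ ^ (d - 2 + 1) := by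
    rw [rpow_one_div_sub_one_pow hq.le (by omega)]
    have : (1 - p) / (d - 2).factorial * q = 2 * (C * √p / √(d - 2).factorial) := by
      simp only [q]
      field_simp
      rw [Real.sq_sqrt (by positivity)]
    rw [this]
    linarith [show 0 < C * √p / √(d - 2).factorial by positivity]
  have hev := ((tendsto_id.const_mul_atTop hκ).eventually_ge_atTop (d : ℝ)).and
    (eventually_lt_of_lt_leadingCoeff (d - 2) hlead (u := 1) (v := d)
      (B₁ := √(2 * (p * (1 - p) * (d * (d - 1))) * ℓ)) (B₂ := 2 / 3 * ((d - 1) * (d - 2)) * ℓ))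
  filter_upwards [(Real.tendsto_sqrt_atTop.comp tendsto_natCast_atTop_atTop).eventually hev]
    with n ⟨hdκ, hpoly⟩ T hT
  dsimp only [Function.comp_apply, id] at hdκ hpoly
  have hk : κ * √n < T.card := by rw [hT]; push_cast; exact Nat.lt_floor_add_one _
  have hT0 : T.Nonempty := card_pos.1 (by omega)
  have hthreshold := threshold_le (n := n) (d := d) hC.le hp0.le
  have hsignal := le_signal hp1.le (by omega) hdκ hk
  have hfluct := fluctuation_le (mul_pos hp0 h1p).le hℓ hU
    (F := (univ : Finset (Finset (Fin n))).filter (fun e => e.card = d ∧ ¬ e ⊆ T))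
    (fun e he => (mem_filter.1 he).2.1) hT0
  linarith
end

section
/- Let M, M* ∈ ℝ^{n×n} be symmetric matrices, λ the largest eigenvalue of M with corresponding unit eigenvector u, λ* > 0 the largest eigenvalue of M*, u* ∈ ℝⁿ any vector, and u^{(−m)} ∈ ℝⁿ a vector for each m ∈ [n]. Suppose Δ₀ := ‖M − M*‖/λ* ≤ 1/2. Define r := (1/λ*)·( max_{m ∈ [n]} |M_{m:}(u^{(−m)} − u*)| + ‖M‖_{2→∞} · max_{m ∈ [n]} ‖u − u^{(−m)}‖₂ ). Then ‖u − Mu*/λ*‖_∞ ≤ 2Δ₀·‖Mu*‖_∞/λ* + 2r. -/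
open MeasureTheory Filter Finset Matrix
open scoped ENNReal

open HPC MeasureTheory Filter Finset Matrix
open scoped ENNReal Topology

/-!
Comparing Rayleigh quotients gives Weyl's bound `|λ - λ*| ≤ ‖M - M*‖ = Δ₀ λ* ≤ λ*/2`, hence
`λ ≥ λ*/2` and `|λ⁻¹ - λ*⁻¹| ≤ 2Δ₀/λ*`. Entrywise `u_m = (Mu)_m / λ`, and routing
`M_{m:}(u - u*)` through the leave-one-out vector `u^{(-m)}` (Cauchy–Schwarz on the first piece)
gives `|(Mu)_m - (Mu*)_m| ≤ λ* r`. Writing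
`u_m - (Mu*)_m/λ* = (Mu)_m (λ⁻¹ - λ*⁻¹) + ((Mu)_m - (Mu*)_m)/λ*` and using `2Δ₀ ≤ 1` on the
cross term `λ* r · 2Δ₀/λ*` yields the bound.
-/

namespace HPC

variable {n : ℕ}

lemma norm2_eq_norm_toLp (v : Fin n → ℝ) : norm2 v = ‖WithLp.toLp 2 v‖ := by
  simp only [norm2, EuclideanSpace.norm_eq, Real.norm_eq_abs, sq_abs]

lemma norm2_nonneg (v : Fin n → ℝ) : 0 ≤ norm2 v := Real.sqrt_nonneg _

lemma dotProduct_self_eq_norm2_sq (v : Fin n → ℝ) : v ⬝ᵥ v = norm2 v ^ 2 := by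
  rw [norm2, Real.sq_sqrt (by positivity)]
  simp only [dotProduct, sq]

lemma dotProduct_eq_inner_toLp (v w : Fin n → ℝ) :
    v ⬝ᵥ w = inner ℝ (WithLp.toLp 2 v) (WithLp.toLp 2 w) := by
  rw [EuclideanSpace.inner_toLp_toLp, star_trivial, dotProduct_comm]

lemma abs_dotProduct_le_norm2_mul_norm2 (v w : Fin n → ℝ) : |v ⬝ᵥ w| ≤ norm2 v * norm2 w := by
  rw [dotProduct_eq_inner_toLp, norm2_eq_norm_toLp, norm2_eq_norm_toLp]
  exact abs_real_inner_le_norm _ _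

lemma abs_dotProduct_mulVec_le_specNorm (A : Matrix (Fin n) (Fin n) ℝ) (w : Fin n → ℝ) :
    |w ⬝ᵥ A *ᵥ w| ≤ specNorm A * norm2 w ^ 2 := by
  set T := LinearMap.toContinuousLinearMap (Matrix.toEuclideanLin A)
  have hT : WithLp.toLp 2 (A *ᵥ w) = T (WithLp.toLp 2 w) := by
    simp [T]
  calc |w ⬝ᵥ A *ᵥ w| ≤ norm2 w * norm2 (A *ᵥ w) := abs_dotProduct_le_norm2_mul_norm2 _ _
    _ ≤ norm2 w * (‖T‖ * norm2 w) := by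
      rw [norm2_eq_norm_toLp (A *ᵥ w), hT, norm2_eq_norm_toLp]
      exact mul_le_mul_of_nonneg_left (T.le_opNorm _) (norm_nonneg _)
    _ = specNorm A * norm2 w ^ 2 := by rw [specNorm]; ring

lemma norm2_le_norm2toInf (A : Matrix (Fin n) (Fin n) ℝ) (m : Fin n) :
    norm2 (A m) ≤ norm2toInf A :=
  (le_abs_self _).trans (norm_le_pi_norm (fun i => norm2 (A i)) m)

lemma norm2toInf_nonneg (A : Matrix (Fin n) (Fin n) ℝ) : 0 ≤ norm2toInf A := norm_nonneg _

lemma abs_apply_le_normInf (v : Fin n → ℝ) (m : Fin n) : |v m| ≤ normInf v :=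
  norm_le_pi_norm v m

lemma le_maxOver (hn : 0 < n) (f : Fin n → ℝ) (m : Fin n) : f m ≤ maxOver hn f :=
  Finset.le_sup' f (Finset.mem_univ m)

namespace IsTopEigenpair

variable {A : Matrix (Fin n) (Fin n) ℝ} {μ : ℝ} {v : Fin n → ℝ}

lemma dotProduct_mulVec_self (h : IsTopEigenpair A μ v) : v ⬝ᵥ A *ᵥ v = μ := by
  rw [h.2.1, dotProduct_smul, dotProduct_self_eq_norm2_sq, h.1, smul_eq_mul, one_pow, mul_one]

lemma posSemidef_smul_one_sub (hA : A.IsSymm) (h : IsTopEigenpair A μ v) :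
    (μ • 1 - A).PosSemidef := by
  have hB : (μ • 1 - A).IsHermitian := by
    rw [Matrix.IsHermitian, Matrix.conjTranspose_eq_transpose_of_trivial, Matrix.transpose_sub,
      Matrix.transpose_smul, Matrix.transpose_one, hA.eq]
  rw [hB.posSemidef_iff_eigenvalues_nonneg]
  intro i
  set e := (hB.eigenvectorBasis i).ofLp
  have he : e ≠ 0 := (WithLp.ofLp_eq_zero 2).ne.2 (hB.eigenvectorBasis.orthonormal.ne_zero i)
  have hAe : A *ᵥ e = (μ - hB.eigenvalues i) • e := by
    have := hB.mulVec_eigenvectorBasis i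
    rw [Matrix.sub_mulVec, Matrix.smul_mulVec, Matrix.one_mulVec] at this
    rw [sub_smul, ← this, sub_sub_cancel]
  have := h.2.2 _ e he hAe
  simp only [Pi.zero_apply]
  linarith

lemma dotProduct_mulVec_le (hA : A.IsSymm) (h : IsTopEigenpair A μ v) (w : Fin n → ℝ) :
    w ⬝ᵥ A *ᵥ w ≤ μ * norm2 w ^ 2 := by
  have := (h.posSemidef_smul_one_sub hA).dotProduct_mulVec_nonneg w
  rw [star_trivial, Matrix.sub_mulVec, Matrix.smul_mulVec, Matrix.one_mulVec, dotProduct_sub,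
    dotProduct_smul, dotProduct_self_eq_norm2_sq, smul_eq_mul] at this
  linarith

end IsTopEigenpair

/-- Weyl's inequality for the top eigenvalue. -/
lemma abs_sub_le_specNorm_of_isTopEigenpair {A B : Matrix (Fin n) (Fin n) ℝ} (hA : A.IsSymm)
    (hB : B.IsSymm) {a b : ℝ} {u w : Fin n → ℝ} (hu : IsTopEigenpair A a u)
    (hw : IsTopEigenpair B b w) : |a - b| ≤ specNorm (A - B) := by
  have hu_le : a - b ≤ u ⬝ᵥ (A - B) *ᵥ u := by
    have := hw.dotProduct_mulVec_le hB u
    rw [hu.1, one_pow, mul_one] at this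
    rw [Matrix.sub_mulVec, dotProduct_sub, hu.dotProduct_mulVec_self]
    linarith
  have hw_ge : w ⬝ᵥ (A - B) *ᵥ w ≤ a - b := by
    have := hu.dotProduct_mulVec_le hA w
    rw [hw.1, one_pow, mul_one] at this
    rw [Matrix.sub_mulVec, dotProduct_sub, hw.dotProduct_mulVec_self]
    linarith
  have hu_abs := abs_dotProduct_mulVec_le_specNorm (A - B) u
  have hw_abs := abs_dotProduct_mulVec_le_specNorm (A - B) w
  rw [hu.1] at hu_abs
  rw [hw.1] at hw_abs
  rw [abs_le]
  constructor <;> linarith [abs_le.mp hu_abs, abs_le.mp hw_abs]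

lemma abs_dotProduct_sub_le (r u v w : Fin n → ℝ) :
    |r ⬝ᵥ u - r ⬝ᵥ w| ≤ |r ⬝ᵥ (v - w)| + norm2 r * norm2 (u - v) := by
  have hsplit : r ⬝ᵥ u - r ⬝ᵥ w = r ⬝ᵥ (v - w) + r ⬝ᵥ (u - v) := by
    simp only [dotProduct_sub]; ring
  rw [hsplit]
  exact (abs_add_le _ _).trans (by gcongr; exact abs_dotProduct_le_norm2_mul_norm2 _ _)

lemma abs_mulVec_sub_mulVec_le (hn : 0 < n) (M : Matrix (Fin n) (Fin n) ℝ)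
    (u ustar : Fin n → ℝ) (um : Fin n → Fin n → ℝ) (m : Fin n) :
    |(M *ᵥ u) m - (M *ᵥ ustar) m|
      ≤ maxOver hn (fun m => |M m ⬝ᵥ (um m - ustar)|)
        + norm2toInf M * maxOver hn (fun m => norm2 (u - um m)) :=
  (abs_dotProduct_sub_le (M m) u (um m) ustar).trans <|
    add_le_add (le_maxOver hn (fun m => |M m ⬝ᵥ (um m - ustar)|) m)
      (mul_le_mul (norm2_le_norm2toInf M m) (le_maxOver hn (fun m => norm2 (u - um m)) m)
        (norm2_nonneg _) (norm2toInf_nonneg M))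

end HPC

lemma abs_inv_sub_inv_le_of_abs_sub_le {a b Δ : ℝ} (hb : 0 < b) (hΔ : 2 * Δ ≤ b)
    (h : |a - b| ≤ Δ) : |a⁻¹ - b⁻¹| ≤ 2 * Δ / b ^ 2 := by
  have ha : b / 2 ≤ a := by linarith [(abs_le.mp h).1]
  have ha0 : 0 < a := by linarith
  rw [inv_sub_inv ha0.ne' hb.ne', abs_div, abs_sub_comm, abs_of_pos (mul_pos ha0 hb)]
  calc |a - b| / (a * b) ≤ Δ / (b ^ 2 / 2) :=
        div_le_div₀ ((abs_nonneg _).trans h) h (by positivity) (by nlinarith)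
    _ = 2 * Δ / b ^ 2 := by field_simp

lemma abs_sub_inv_mul_le_of_mul_eq {lam lamstar Δ x a b N R : ℝ} (hlamstar : 0 < lamstar)
    (hΔ : Δ / lamstar ≤ 1 / 2) (hgap : |lam - lamstar| ≤ Δ) (hx : lam * x = a)
    (hb : |b| ≤ N) (hab : |a - b| ≤ R) :
    |x - lamstar⁻¹ * b| ≤ 2 * (Δ / lamstar) * (N / lamstar) + 2 * (lamstar⁻¹ * R) := by
  have hΔ2 : 2 * Δ ≤ lamstar := by
    rw [div_le_iff₀ hlamstar] at hΔ; linarith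
  have hinv := abs_inv_sub_inv_le_of_abs_sub_le hlamstar hΔ2 hgap
  have hlam : lam ≠ 0 := by
    rintro rfl
    linarith [(abs_le.mp hgap).1]
  have hR : 0 ≤ R := (abs_nonneg _).trans hab
  have ha : |a| ≤ N + R := by
    calc |a| = |b + (a - b)| := by rw [add_sub_cancel]
      _ ≤ N + R := (abs_add_le _ _).trans (add_le_add hb hab)
  have hsplit : x - lamstar⁻¹ * b = a * (lam⁻¹ - lamstar⁻¹) + lamstar⁻¹ * (a - b) := by
    rw [← hx]; field_simp; ring
  have hkey : 2 * Δ / lamstar ^ 2 * R ≤ lamstar⁻¹ * R := by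
    gcongr
    calc 2 * Δ / lamstar ^ 2 ≤ lamstar / lamstar ^ 2 := by gcongr
      _ = lamstar⁻¹ := by field_simp
  rw [hsplit]
  calc |a * (lam⁻¹ - lamstar⁻¹) + lamstar⁻¹ * (a - b)|
      ≤ |a * (lam⁻¹ - lamstar⁻¹)| + |lamstar⁻¹ * (a - b)| := abs_add_le _ _
    _ = |a| * |lam⁻¹ - lamstar⁻¹| + lamstar⁻¹ * |a - b| := by
        rw [abs_mul, abs_mul, abs_of_pos (inv_pos.2 hlamstar)]
    _ ≤ (N + R) * (2 * Δ / lamstar ^ 2) + lamstar⁻¹ * R := by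
        gcongr
        linarith [abs_nonneg b]
    _ ≤ 2 * (Δ / lamstar) * (N / lamstar) + 2 * (lamstar⁻¹ * R) := by
        have : 2 * (Δ / lamstar) * (N / lamstar) = N * (2 * Δ / lamstar ^ 2) := by ring
        linarith

/-- **One-step proxy bound.** If `Δ₀ = ‖M − M*‖/λ* ≤ 1/2`, then
`‖u − Mu*/λ*‖_∞ ≤ 2Δ₀ ‖Mu*‖_∞/λ* + 2r`. -/
theorem one_step_proxy_bound (n : ℕ) (hn : 0 < n)
    (M Mstar : Matrix (Fin n) (Fin n) ℝ) (hM : M.IsSymm) (hMstar : Mstar.IsSymm)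
    (lam lamstar : ℝ) (u : Fin n → ℝ)
    (hu : IsTopEigenpair M lam u)
    (hlamstar_pos : 0 < lamstar)
    (hlamstar : ∃ w : Fin n → ℝ, IsTopEigenpair Mstar lamstar w)
    (ustar : Fin n → ℝ) (um : Fin n → Fin n → ℝ)
    (hΔ : specNorm (M - Mstar) / lamstar ≤ 1 / 2) :
    normInf (u - lamstar⁻¹ • M.mulVec ustar)
      ≤ 2 * (specNorm (M - Mstar) / lamstar) * (normInf (M.mulVec ustar) / lamstar)
        + 2 * (lamstar⁻¹ *
            (maxOver hn (fun m => |M m ⬝ᵥ (um m - ustar)|)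
              + norm2toInf M * maxOver hn (fun m => norm2 (u - um m)))) := by
  obtain ⟨w, hw⟩ := hlamstar
  have hgap := abs_sub_le_specNorm_of_isTopEigenpair hM hMstar hu hw
  have : Nonempty (Fin n) := ⟨⟨0, hn⟩⟩
  refine (pi_norm_le_iff_of_nonempty _).2 fun m => ?_
  rw [Real.norm_eq_abs, Pi.sub_apply, Pi.smul_apply, smul_eq_mul]
  exact abs_sub_inv_mul_le_of_mul_eq hlamstar_pos hΔ hgap (congrFun hu.2.1 m).symm
    (abs_apply_le_normInf _ m) (abs_mulVec_sub_mulVec_le hn M u ustar um m)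
end

section
/- Let A ∈ ℝ^{n×n} be symmetric with largest eigenvalue λ₁(A) of multiplicity one and corresponding unit eigenvector v. Fix λ̂ ∈ ℝ and a unit vector x ∈ ℝⁿ, set δ(λ̂) := min_{i ≥ 2} |λ_i(A) − λ̂|, and assume δ(λ̂) > 0. If the sign of v is chosen so that ⟨x, v⟩ ≥ 0, then ‖x − v‖₂ ≤ (√2 / δ(λ̂)) · ‖(A − λ̂ I) x‖₂. -/
open MeasureTheory Filter Finset Matrix
open scoped ENNReal

open HPC MeasureTheory Filter Finset Matrix
open scoped ENNReal Topology

/-- **Residual-form Davis–Kahan bound.** For a symmetric matrix `A` with simple top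
eigenvalue and top unit eigenvector `v`, any unit vector `x` with `⟨x,v⟩ ≥ 0` satisfies
`‖x − v‖₂ ≤ (√2/δ(λ̂)) ‖(A − λ̂ I) x‖₂`. -/
theorem davis_kahan_residual (n : ℕ) [NeZero n] (hn : 2 ≤ n)
    (A : Matrix (Fin n) (Fin n) ℝ) (hA : A.IsSymm)
    (lam : Fin n → ℝ) (U : Fin n → Fin n → ℝ) (hdec : IsEigenDecomp A lam U)
    (hmult : ∀ i : Fin n, i ≠ 0 → lam i < lam 0)
    (v : Fin n → ℝ) (hv_norm : norm2 v = 1) (hv_eig : A.mulVec v = lam 0 • v)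
    (lamHat : ℝ) (x : Fin n → ℝ) (hx : norm2 x = 1)
    (hδ : 0 < minOffTop hn lam lamHat)
    (hsign : 0 ≤ x ⬝ᵥ v) :
    norm2 (x - v)
      ≤ Real.sqrt 2 / minOffTop hn lam lamHat *
          norm2 ((A - lamHat • (1 : Matrix (Fin n) (Fin n) ℝ)).mulVec x) := by
  classical
  obtain ⟨horth, heig, -⟩ := hdec
  set δ := minOffTop hn lam lamHat with hδdef
  -- the eigenbasis as a matrix
  set M : Matrix (Fin n) (Fin n) ℝ := Matrix.of U with hM
  have hMapp : ∀ w : Fin n → ℝ, ∀ i, M.mulVec w i = U i ⬝ᵥ w := fun w i => rfl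
  have h1 : M * Mᵀ = 1 := by
    ext i j
    have := horth i j
    simpa [Matrix.mul_apply, Matrix.one_apply, dotProduct, hM] using this
  have h2 : Mᵀ * M = 1 := mul_eq_one_comm.mp h1
  -- Parseval
  have hP : ∀ w w' : Fin n → ℝ, M.mulVec w ⬝ᵥ M.mulVec w' = w ⬝ᵥ w' := by
    intro w w'
    rw [Matrix.dotProduct_mulVec, ← Matrix.mulVec_transpose, Matrix.mulVec_mulVec, h2,
      Matrix.one_mulVec]
  -- symmetry of A in dot products
  have hsymdot : ∀ u w : Fin n → ℝ, u ⬝ᵥ A.mulVec w = A.mulVec u ⬝ᵥ w := by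
    intro u w
    rw [Matrix.dotProduct_mulVec, ← Matrix.mulVec_transpose, hA.eq]
  set c : Fin n → ℝ := M.mulVec x with hc
  set d : Fin n → ℝ := M.mulVec v with hd
  set r : Fin n → ℝ := (A - lamHat • (1 : Matrix (Fin n) (Fin n) ℝ)).mulVec x with hr
  have hrx : r = A.mulVec x - lamHat • x := by
    rw [hr, Matrix.sub_mulVec, Matrix.smul_mulVec, Matrix.one_mulVec]
  -- coordinates of the residual
  have hρ : ∀ i, M.mulVec r i = (lam i - lamHat) * c i := by
    intro i
    rw [hMapp, hrx, dotProduct_sub, hsymdot, heig i, smul_dotProduct, dotProduct_smul]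
    have : U i ⬝ᵥ x = c i := (hMapp x i).symm
    rw [this]; simp only [smul_eq_mul]; ring
  -- norms squared via Parseval
  have hxx : ∑ i, x i ^ 2 = 1 := by
    have h0 : (0:ℝ) ≤ ∑ i, x i ^ 2 := Finset.sum_nonneg fun i _ => sq_nonneg _
    have := hv_norm
    have hx1 : Real.sqrt (∑ i, x i ^ 2) = 1 := hx
    nlinarith [Real.sq_sqrt h0, hx1]
  have hvv : ∑ i, v i ^ 2 = 1 := by
    have h0 : (0:ℝ) ≤ ∑ i, v i ^ 2 := Finset.sum_nonneg fun i _ => sq_nonneg _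
    have hv1 : Real.sqrt (∑ i, v i ^ 2) = 1 := hv_norm
    nlinarith [Real.sq_sqrt h0, hv1]
  have hdot_sq : ∀ w : Fin n → ℝ, w ⬝ᵥ w = ∑ i, w i ^ 2 := by
    intro w; simp [dotProduct, sq]
  have hcc : ∑ i, c i ^ 2 = 1 := by
    rw [← hdot_sq, hc, hP, hdot_sq, hxx]
  have hdd : ∑ i, d i ^ 2 = 1 := by
    rw [← hdot_sq, hd, hP, hdot_sq, hvv]
  -- v is supported on coordinate 0
  have hd0 : ∀ i : Fin n, i ≠ 0 → d i = 0 := by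
    intro i hi
    have e1 : U i ⬝ᵥ A.mulVec v = lam i * d i := by
      rw [hsymdot, heig i, smul_dotProduct]
      rw [show U i ⬝ᵥ v = d i from (hMapp v i).symm]; simp [smul_eq_mul]
    have e2 : U i ⬝ᵥ A.mulVec v = lam 0 * d i := by
      rw [hv_eig, dotProduct_smul]
      rw [show U i ⬝ᵥ v = d i from (hMapp v i).symm]; simp [smul_eq_mul]
    have hne : lam i ≠ lam 0 := ne_of_lt (hmult i hi)
    have : (lam i - lam 0) * d i = 0 := by linarith [e1, e2]
    rcases mul_eq_zero.mp this with h | h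
    · exact absurd (by linarith : lam i = lam 0) hne
    · exact h
  have hd0sq : d 0 ^ 2 = 1 := by
    have hs : ∑ i, d i ^ 2 = d 0 ^ 2 :=
      Finset.sum_eq_single (0 : Fin n) (fun i _ hi => by rw [hd0 i hi]; ring)
        (fun h => absurd (Finset.mem_univ _) h)
    rw [← hs, hdd]
  -- inner product ⟨x, v⟩ = c 0 * d 0
  have hxv : x ⬝ᵥ v = c 0 * d 0 := by
    rw [← hP x v, ← hc, ← hd]
    rw [show M.mulVec x ⬝ᵥ M.mulVec v = ∑ i, c i * d i from rfl]
    exact Finset.sum_eq_single (0 : Fin n) (fun i _ hi => by rw [hd0 i hi]; ring)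
      (fun h => absurd (Finset.mem_univ _) h)
  have hcd0 : 0 ≤ c 0 * d 0 := by rw [← hxv]; exact hsign
  have habs : c 0 * d 0 = |c 0| := by
    have h1 : |d 0| = 1 := by
      rw [← Real.sqrt_sq_eq_abs, hd0sq, Real.sqrt_one]
    calc c 0 * d 0 = |c 0 * d 0| := (abs_of_nonneg hcd0).symm
    _ = |c 0| * |d 0| := abs_mul _ _
    _ = |c 0| := by rw [h1, mul_one]
  -- ‖x - v‖² = 2 - 2⟨x,v⟩
  have hxmv : ∑ i, (x i - v i) ^ 2 = 2 - 2 * (c 0 * d 0) := by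
    have : ∑ i, (x i - v i) ^ 2 = ∑ i, x i ^ 2 + ∑ i, v i ^ 2 - 2 * ∑ i, x i * v i := by
      rw [← Finset.sum_add_distrib, Finset.mul_sum, ← Finset.sum_sub_distrib]
      exact Finset.sum_congr rfl fun i _ => by ring
    rw [this, hxx, hvv, show ∑ i, x i * v i = x ⬝ᵥ v from rfl, hxv]; ring
  -- residual norm squared
  have hrr : ∑ i, r i ^ 2 = ∑ i, ((lam i - lamHat) * c i) ^ 2 := by
    rw [← hdot_sq, ← hP r r, hdot_sq]
    exact Finset.sum_congr rfl fun i _ => by rw [hρ i]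
  -- δ bound on each off-top coordinate
  have hδle : ∀ i : Fin n, i ≠ 0 → δ ≤ |lam i - lamHat| :=
    fun i hi => Finset.inf'_le _ (by simp [hi])
  -- key spectral inequality
  have hkey : δ ^ 2 * (1 - c 0 ^ 2) ≤ ∑ i, r i ^ 2 := by
    rw [hrr]
    have h1 : 1 - c 0 ^ 2 = ∑ i ∈ Finset.univ.filter (fun i => i ≠ 0), c i ^ 2 := by
      have := hcc
      have hsplit : ∑ i, c i ^ 2
          = c 0 ^ 2 + ∑ i ∈ Finset.univ.filter (fun i => i ≠ 0), c i ^ 2 := by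
        rw [← Finset.sum_filter_add_sum_filter_not Finset.univ (fun i => i = 0)]
        congr 1
        rw [Finset.sum_eq_single (0 : Fin n) (fun i hi h2 => by simp at hi; exact absurd hi h2)
          (by simp)]
      linarith
    rw [h1, Finset.mul_sum]
    refine le_trans (Finset.sum_le_sum ?_) (Finset.sum_le_sum_of_subset_of_nonneg
      (Finset.filter_subset _ _) (fun i _ _ => sq_nonneg _))
    intro i hi
    simp only [Finset.mem_filter, Finset.mem_univ, true_and] at hi
    have h2 : δ ≤ |lam i - lamHat| := hδle i hi
    have h3 : δ ^ 2 ≤ (lam i - lamHat) ^ 2 := by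
      rw [← sq_abs (lam i - lamHat)]
      exact pow_le_pow_left₀ hδ.le h2 2
    calc δ ^ 2 * c i ^ 2 ≤ (lam i - lamHat) ^ 2 * c i ^ 2 :=
          mul_le_mul_of_nonneg_right h3 (sq_nonneg _)
      _ = ((lam i - lamHat) * c i) ^ 2 := by ring
  -- assemble
  have hc0abs : |c 0| ≤ 1 := by
    have : c 0 ^ 2 ≤ 1 := by
      rw [← hcc]
      exact Finset.single_le_sum (fun i _ => sq_nonneg (c i)) (Finset.mem_univ 0)
    nlinarith [abs_nonneg (c 0), sq_abs (c 0)]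
  have hfinal : ∑ i, (x i - v i) ^ 2 ≤ (2 / δ ^ 2) * ∑ i, r i ^ 2 := by
    have h4 : c 0 ^ 2 ≤ |c 0| := by
      nlinarith [abs_nonneg (c 0), sq_abs (c 0)]
    have h5 : ∑ i, (x i - v i) ^ 2 ≤ 2 * (1 - c 0 ^ 2) := by
      rw [hxmv, habs]; linarith
    have h6 : 2 * (1 - c 0 ^ 2) ≤ (2 / δ ^ 2) * ∑ i, r i ^ 2 := by
      rw [div_mul_eq_mul_div, le_div_iff₀ (by positivity)]
      nlinarith [hkey]
    linarith
  -- take square roots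
  have hnorm2 : ∀ w : Fin n → ℝ, norm2 w = Real.sqrt (∑ i, w i ^ 2) := fun w => rfl
  rw [hnorm2, hnorm2]
  calc Real.sqrt (∑ i, (x i - v i) ^ 2)
      ≤ Real.sqrt ((2 / δ ^ 2) * ∑ i, r i ^ 2) := Real.sqrt_le_sqrt hfinal
    _ = Real.sqrt (2 / δ ^ 2) * Real.sqrt (∑ i, r i ^ 2) :=
        Real.sqrt_mul (by positivity) _
    _ = Real.sqrt 2 / δ * Real.sqrt (∑ i, r i ^ 2) := by
        rw [Real.sqrt_div (by norm_num : (0:ℝ) ≤ 2), Real.sqrt_sq hδ.le]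
    _ = Real.sqrt 2 / δ * norm2 ((A - lamHat • (1 : Matrix (Fin n) (Fin n) ℝ)).mulVec x) := by
        rw [hnorm2]
end

section
/- Fix integers d ≥ 3 and k ≥ d, a real p ∈ [0,1], and a set S ⊆ [n] with |S| = k. For m ∈ [n], let P^{(m)} := Σ_{e ⊆ S, m ∈ e} (1−p)·B_e, the sum running over d-element subsets e of S containing m, let λ* := (1−p)(k−1)·C(k−2,d−2), and u* := 1_S/√k. Then: if m ∉ S, P^{(m)} = 0; and if m ∈ S, ‖P^{(m)}‖ ≤ 2d·λ*·‖u*‖_∞ = 2d·λ*/√k. -/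
open MeasureTheory Filter Finset Matrix
open scoped ENNReal

open HPC MeasureTheory Filter Finset Matrix
open scoped ENNReal Topology

/-! Every entry `P^{(m)}_{ij}` is `(1 - p)` times the number of `d`-subsets of `S` through `m`, `i`
and `j`: at most `C(k-2, d-2)` when `m ∈ {i, j}` and at most `C(k-3, d-3)` otherwise, and
`(k-2) C(k-3, d-3) = (d-2) C(k-2, d-2)`. Only `2k` entries carry the larger count, so the
Frobenius norm, which dominates the spectral norm, satisfies
`‖P^{(m)}‖² ≤ (1-p)² (k² C(k-3, d-3)² + 2k C(k-2, d-2)²) ≤ (2dλ*/√k)²` once `3 ≤ d ≤ k`. -/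

lemma Finset.card_filter_superset_le_choose {α : Type*} [Fintype α] [DecidableEq α]
    {S t : Finset α} (d : ℕ) (ht : t ⊆ S) :
    #{e | e.card = d ∧ e ⊆ S ∧ t ⊆ e} ≤ (#S - #t).choose (d - #t) := by
  rw [← card_sdiff_of_subset ht, ← card_powersetCard]
  refine card_le_card_of_injOn (· \ t) (fun e he => ?_) fun e₁ he₁ e₂ he₂ h => ?_
  · simp only [coe_filter, mem_univ, true_and, Set.mem_ofPred_eq] at he
    simp only [mem_coe, mem_powersetCard, card_sdiff_of_subset he.2.2, he.1]
    exact ⟨sdiff_subset_sdiff he.2.1 le_rfl, trivial⟩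
  · simp only [coe_filter, mem_univ, true_and, Set.mem_ofPred_eq] at he₁ he₂
    rw [← sdiff_union_of_subset he₁.2.2, ← sdiff_union_of_subset he₂.2.2]
    exact congrArg (· ∪ t) h

lemma Nat.sub_two_mul_choose_sub_three {k d : ℕ} (hd : 3 ≤ d) (hk : 3 ≤ k) :
    (k - 2) * (k - 3).choose (d - 3) = (k - 2).choose (d - 2) * (d - 2) := by
  have := Nat.add_one_mul_choose_eq (k - 3) (d - 3)
  rwa [show k - 3 + 1 = k - 2 by omega, show d - 3 + 1 = d - 2 by omega] at this

namespace HPC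

variable {n : ℕ}

lemma specNorm_le_sqrt_sum_sq (M : Matrix (Fin n) (Fin n) ℝ) :
    specNorm M ≤ √(∑ i, ∑ j, M i j ^ 2) := by
  refine ContinuousLinearMap.opNorm_le_bound _ (Real.sqrt_nonneg _) fun x => ?_
  rw [LinearMap.coe_toContinuousLinearMap', EuclideanSpace.norm_eq, EuclideanSpace.norm_eq,
    ← Real.sqrt_mul (by positivity), Finset.sum_mul]
  refine Real.sqrt_le_sqrt (Finset.sum_le_sum fun i _ => ?_)
  simp only [Real.norm_eq_abs, sq_abs]
  exact Finset.sum_mul_sq_le_sq_mul_sq univ (M i) x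

lemma sum_smul_coB_apply (E : Finset (Finset (Fin n))) (c : ℝ) (i j : Fin n) :
    (∑ e ∈ E, c • coB e) i j = c * #{e ∈ E | i ≠ j ∧ i ∈ e ∧ j ∈ e} := by
  simp only [Matrix.sum_apply, Matrix.smul_apply, coB, of_apply, smul_eq_mul, mul_ite, mul_one,
    mul_zero]
  rw [← Finset.sum_filter, sum_const, nsmul_eq_mul, mul_comm]

variable {d : ℕ} {S : Finset (Fin n)} {m : Fin n}

def plantedStar (d : ℕ) (S : Finset (Fin n)) (m : Fin n) : Finset (Finset (Fin n)) :=
  {e | e.card = d ∧ e ⊆ S ∧ m ∈ e}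

lemma card_plantedStar_filter_pair_le (hm : m ∈ S) {i j : Fin n} (hi : i ∈ S) (hj : j ∈ S) :
    #{e ∈ plantedStar d S m | i ≠ j ∧ i ∈ e ∧ j ∈ e}
      ≤ (#S - #({m, i, j} : Finset (Fin n))).choose (d - #({m, i, j} : Finset (Fin n))) := by
  refine (card_le_card fun e he => ?_).trans (card_filter_superset_le_choose d ?_)
  · simp only [plantedStar, mem_filter, mem_univ, true_and] at he ⊢
    exact ⟨he.1.1, he.1.2.1, insert_subset he.1.2.2 (insert_subset he.2.2.1
      (singleton_subset_iff.2 he.2.2.2))⟩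
  · exact insert_subset hm (insert_subset hi (singleton_subset_iff.2 hj))

lemma card_plantedStar_filter_pair_sq_le (hm : m ∈ S) (i j : Fin n) :
    (#{e ∈ plantedStar d S m | i ≠ j ∧ i ∈ e ∧ j ∈ e} : ℝ) ^ 2 ≤
      ((#S - 3).choose (d - 3) : ℝ) ^ 2 *
          ((if i ∈ S then 1 else 0) * (if j ∈ S then 1 else 0)) +
        ((#S - 2).choose (d - 2) : ℝ) ^ 2 *
          ((if i = m then 1 else 0) * (if j ∈ S then 1 else 0) +
            (if i ∈ S then 1 else 0) * (if j = m then 1 else 0)) := by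
  by_cases hij : i ∈ S ∧ j ∈ S ∧ i ≠ j
  swap
  · have : #{e ∈ plantedStar d S m | i ≠ j ∧ i ∈ e ∧ j ∈ e} = 0 := by
      refine card_eq_zero.2 (filter_eq_empty_iff.2 fun e he hije => hij ?_)
      simp only [plantedStar, mem_filter, mem_univ, true_and] at he
      exact ⟨he.2.1 hije.2.1, he.2.1 hije.2.2, hije.1⟩
    rw [this, Nat.cast_zero, zero_pow two_ne_zero]
    positivity
  obtain ⟨hi, hj, hne⟩ := hij
  have hcount := card_plantedStar_filter_pair_le (d := d) hm hi hj
  by_cases hmij : m = i ∨ m = j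
  · have : #({m, i, j} : Finset (Fin n)) = 2 := by
      rcases hmij with rfl | rfl <;> simp [hne, hne.symm]
    rw [this] at hcount
    have hind : 1 ≤ (if i = m then (1 : ℝ) else 0) + (if j = m then 1 else 0) := by
      rcases hmij with rfl | rfl <;> simp [hne, hne.symm]
    have hsq : (#{e ∈ plantedStar d S m | i ≠ j ∧ i ∈ e ∧ j ∈ e} : ℝ) ^ 2
        ≤ ((#S - 2).choose (d - 2) : ℝ) ^ 2 := by
      gcongr
    simp only [hi, hj, if_true, mul_one, one_mul]
    nlinarith [sq_nonneg ((#S - 3).choose (d - 3) : ℝ), sq_nonneg ((#S - 2).choose (d - 2) : ℝ)]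
  · obtain ⟨hmi, hmj⟩ := not_or.1 hmij
    have : #({m, i, j} : Finset (Fin n)) = 3 := by
      rw [card_insert_of_notMem (by simp [hmi, hmj]), card_pair hne]
    rw [this] at hcount
    simp only [hi, hj, if_true, mul_one, Ne.symm hmi, Ne.symm hmj, if_false, add_zero, mul_zero]
    gcongr

lemma sum_sq_sum_smul_coB_plantedStar_le (hm : m ∈ S) (c : ℝ) :
    ∑ i, ∑ j, (∑ e ∈ plantedStar d S m, c • coB e) i j ^ 2 ≤
      c ^ 2 * (((#S - 3).choose (d - 3) : ℝ) ^ 2 * #S ^ 2 +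
        2 * ((#S - 2).choose (d - 2) : ℝ) ^ 2 * #S) := by
  simp only [sum_smul_coB_apply, mul_pow, ← mul_sum]
  gcongr
  refine (sum_le_sum fun i _ => sum_le_sum fun j _ =>
    card_plantedStar_filter_pair_sq_le hm i j).trans_eq ?_
  simp only [mul_ite, mul_one, mul_zero, sum_add_distrib, sum_ite_mem, univ_inter, sum_ite_irrel,
    sum_const, nsmul_eq_mul, ← mul_sum, sum_ite_eq', mem_univ, if_true]
  ring

lemma lamStar_nonneg {d k : ℕ} {p : ℝ} (hk : 1 ≤ k) (hp : p ≤ 1) : 0 ≤ lamStar d k p := by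
  have hk' : (0 : ℝ) ≤ k - 1 := by rw [sub_nonneg]; exact_mod_cast hk
  have hp' : 0 ≤ 1 - p := by linarith
  unfold lamStar
  positivity

lemma sq_frobenius_le_sq_two_mul_lamStar_div_sqrt {d k : ℕ} (p : ℝ) (hd : 3 ≤ d) (hdk : d ≤ k) :
    (1 - p) ^ 2 * (((k - 3).choose (d - 3) : ℝ) ^ 2 * k ^ 2 +
        2 * ((k - 2).choose (d - 2) : ℝ) ^ 2 * k) ≤
      (2 * d * lamStar d k p / √k) ^ 2 := by
  have hk : (0 : ℝ) < k := by norm_cast; omega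
  rw [div_pow, Real.sq_sqrt hk.le, le_div_iff₀ hk, lamStar]
  set a : ℝ := (((k - 3).choose (d - 3) : ℕ) : ℝ)
  set b : ℝ := (((k - 2).choose (d - 2) : ℕ) : ℝ)
  have hab : ((k : ℝ) - 2) * a = b * (d - 2) := by
    have := Nat.sub_two_mul_choose_sub_three (k := k) hd (by omega)
    rw [← Nat.cast_inj (R := ℝ)] at this
    push_cast [Nat.cast_sub (show 2 ≤ k by omega), Nat.cast_sub (show 2 ≤ d by omega)] at this
    exact this
  have hdR : (3 : ℝ) ≤ d := by exact_mod_cast hd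
  have hdkR : (d : ℝ) ≤ k := by exact_mod_cast hdk
  have ha : 0 ≤ a := Nat.cast_nonneg _
  -- from `(k - 2) a = (d - 2) b` and `k ≤ 3 (k - 2)`
  have hak : a * k ≤ 3 * (d - 2) * b := by nlinarith
  have hak2 : a ^ 2 * k ^ 2 ≤ 9 * (d - 2) ^ 2 * b ^ 2 := by nlinarith [mul_nonneg ha hk.le]
  have hpoly : 9 * ((d : ℝ) - 2) ^ 2 * k + 2 * (k : ℝ) ^ 2 ≤ 4 * (d : ℝ) ^ 2 * (k - 1) ^ 2 := by
    nlinarith [mul_nonneg (sub_nonneg.2 hdR) (sub_nonneg.2 hdkR)]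
  have : (a ^ 2 * k ^ 2 + 2 * b ^ 2 * k) * k ≤ (2 * d * (k - 1) * b) ^ 2 := by
    nlinarith [mul_le_mul_of_nonneg_right hpoly (sq_nonneg b)]
  nlinarith [mul_le_mul_of_nonneg_left this (sq_nonneg (1 - p))]

end HPC

theorem planted_perturbation_bound_general (n d k : ℕ) (hd : 3 ≤ d) (hdk : d ≤ k)
    (p : ℝ) (hp : p ∈ Set.Icc (0 : ℝ) 1)
    (S : Finset (Fin n)) (hS : S.card = k) (m : Fin n) :
    (m ∉ S →
        (∑ e ∈ (univ : Finset (Finset (Fin n))).filter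
            (fun e => e.card = d ∧ e ⊆ S ∧ m ∈ e), (1 - p) • coB e) = 0) ∧
      (m ∈ S →
        specNorm
            (∑ e ∈ (univ : Finset (Finset (Fin n))).filter
              (fun e => e.card = d ∧ e ⊆ S ∧ m ∈ e), (1 - p) • coB e)
          ≤ 2 * (d : ℝ) * lamStar d k p / Real.sqrt k) := by
  refine ⟨fun hm => sum_eq_zero fun e he => absurd ((mem_filter.1 he).2.2.1
    (mem_filter.1 he).2.2.2) hm, fun hm => ?_⟩
  have hfrob := sum_sq_sum_smul_coB_plantedStar_le (d := d) hm (1 - p)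
  rw [hS] at hfrob
  have hbound : 0 ≤ 2 * (d : ℝ) * lamStar d k p / √k :=
    div_nonneg (mul_nonneg (by positivity) (lamStar_nonneg (by omega) hp.2)) (Real.sqrt_nonneg _)
  exact (specNorm_le_sqrt_sum_sq _).trans <| Real.sqrt_le_iff.2
    ⟨hbound, hfrob.trans (sq_frobenius_le_sq_two_mul_lamStar_div_sqrt p hd hdk)⟩

/-- **Deterministic bound for `P^{(m)}`.** If `m ∉ S` then `P^{(m)} = 0`; if `m ∈ S` then
`‖P^{(m)}‖ ≤ 2d λ*/√k`. -/
theorem planted_perturbation_bound (n d k : ℕ) (hd : 3 ≤ d) (hdk : d ≤ k) (hkn : k ≤ n)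
    (p : ℝ) (hp : p ∈ Set.Icc (0 : ℝ) 1)
    (S : Finset (Fin n)) (hS : S.card = k) (m : Fin n) :
    (m ∉ S →
        (∑ e ∈ (univ : Finset (Finset (Fin n))).filter
            (fun e => e.card = d ∧ e ⊆ S ∧ m ∈ e), (1 - p) • coB e) = 0) ∧
      (m ∈ S →
        specNorm
            (∑ e ∈ (univ : Finset (Finset (Fin n))).filter
              (fun e => e.card = d ∧ e ⊆ S ∧ m ∈ e), (1 - p) • coB e)
          ≤ 2 * (d : ℝ) * lamStar d k p / Real.sqrt k) :=
  planted_perturbation_bound_general n d k hd hdk p hp S hS m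
end

section
/- Fix integers n ≥ d ≥ 2, an index i ∈ [n], and v ∈ ℝⁿ. For each d-element subset e of [n] with i ∈ e, let a_e := Σ_{j ∈ e∖{i}} v_j. Then Σ_{e : i ∈ e} a_e² ≤ (d−1)·C(n−2,d−2)·‖v‖₂², the sum running over all d-element subsets e of [n] containing i. -/
open MeasureTheory Filter Finset Matrix
open scoped ENNReal

open HPC MeasureTheory Filter Finset Matrix
open scoped ENNReal Topology

lemma count_edges (n d : ℕ) (hd : 2 ≤ d) (i j : Fin n) (hij : j ≠ i) :
    ((univ : Finset (Finset (Fin n))).filter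
        (fun e => (e.card = d ∧ i ∈ e) ∧ j ∈ e)).card = (n - 2).choose (d - 2) := by
  have hcard : (((univ : Finset (Fin n)).erase i).erase j).card = n - 2 := by
    rw [Finset.card_erase_of_mem (by simp [Finset.mem_erase, hij]),
      Finset.card_erase_of_mem (by simp)]
    simp only [Finset.card_univ, Fintype.card_fin]
    omega
  rw [← hcard, ← Finset.card_powersetCard]
  refine Finset.card_bij' (fun e _ => (e.erase i).erase j)
      (fun s _ => insert i (insert j s)) ?hi ?hj ?left ?right
  case hi =>
    intro e he
    simp only [Finset.mem_filter, Finset.mem_univ, true_and] at he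
    obtain ⟨⟨hc, hi⟩, hj⟩ := he
    simp only [Finset.mem_powersetCard]
    constructor
    · intro x hx; simp only [Finset.mem_erase] at hx ⊢; simp [hx.1, hx.2.1]
    · rw [Finset.card_erase_of_mem (by simp [Finset.mem_erase, hij, hj]),
        Finset.card_erase_of_mem hi, hc]
      omega
  case hj =>
    intro s hs
    simp only [Finset.mem_powersetCard] at hs
    obtain ⟨hsub, hc⟩ := hs
    have hjs : j ∉ s := fun h => by simpa using (hsub h)
    have his : i ∉ s := fun h => by
      have := hsub h; simp [Finset.mem_erase] at this
    simp only [Finset.mem_filter, Finset.mem_univ, true_and]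
    refine ⟨⟨?_, by simp⟩, by simp [hij]⟩
    rw [Finset.card_insert_of_notMem (by simp [Finset.mem_insert, his, hij.symm]),
      Finset.card_insert_of_notMem hjs, hc]
    omega
  case left =>
    intro e he
    simp only [Finset.mem_filter, Finset.mem_univ, true_and] at he
    obtain ⟨⟨hc, hi⟩, hj⟩ := he
    rw [Finset.insert_erase (by simp [Finset.mem_erase, hij, hj]), Finset.insert_erase hi]
  case right =>
    intro s hs
    simp only [Finset.mem_powersetCard] at hs
    obtain ⟨hsub, hc⟩ := hs
    have hjs : j ∉ s := fun h => by simpa using (hsub h)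
    have his : i ∉ s := fun h => by
      have := hsub h; simp [Finset.mem_erase] at this
    rw [Finset.erase_insert (by simp [Finset.mem_insert, his, hij.symm]),
      Finset.erase_insert hjs]

theorem sum_ae_sq_bound' (n d : ℕ) (hd : 2 ≤ d) (hn : d ≤ n) (i : Fin n) (v : Fin n → ℝ) :
    ∑ e ∈ (univ : Finset (Finset (Fin n))).filter (fun e => e.card = d ∧ i ∈ e),
        (∑ j ∈ e.erase i, v j) ^ 2
      ≤ ((d : ℝ) - 1) * ((n - 2).choose (d - 2) : ℝ) * (∑ j, v j ^ 2) := by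
  set F := (univ : Finset (Finset (Fin n))).filter (fun e => e.card = d ∧ i ∈ e)
  have step1 : ∑ e ∈ F, (∑ j ∈ e.erase i, v j) ^ 2
      ≤ ∑ e ∈ F, ((d : ℝ) - 1) * ∑ j ∈ e.erase i, v j ^ 2 := by
    apply Finset.sum_le_sum
    intro e he
    simp only [F, Finset.mem_filter, Finset.mem_univ, true_and] at he
    have hcard : (e.erase i).card = d - 1 := by
      rw [Finset.card_erase_of_mem he.2, he.1]
    calc (∑ j ∈ e.erase i, v j) ^ 2 ≤ (e.erase i).card * ∑ j ∈ e.erase i, v j ^ 2 :=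
          sq_sum_le_card_mul_sum_sq
      _ = ((d : ℝ) - 1) * ∑ j ∈ e.erase i, v j ^ 2 := by
          rw [hcard]; congr 1; push_cast [Nat.cast_sub (by omega : 1 ≤ d)]; ring
  have step2 : ∑ e ∈ F, ∑ j ∈ e.erase i, v j ^ 2
      ≤ ((n - 2).choose (d - 2) : ℝ) * ∑ j, v j ^ 2 := by
    have swap : ∑ e ∈ F, ∑ j ∈ e.erase i, v j ^ 2
        = ∑ j, ∑ e ∈ F, if j ∈ e.erase i then v j ^ 2 else 0 := by
      rw [Finset.sum_comm]
      exact Finset.sum_congr rfl fun e _ => by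
        rw [Finset.sum_ite_mem, Finset.univ_inter]
    rw [swap, Finset.mul_sum]
    apply Finset.sum_le_sum
    intro j _
    by_cases hij : j = i
    · subst hij
      simp only [Finset.mem_erase, ne_eq, not_true_eq_false, false_and, if_false,
        Finset.sum_const_zero]
      positivity
    · have heq : ∑ e ∈ F, (if j ∈ e.erase i then v j ^ 2 else 0)
          = ((F.filter fun e => j ∈ e).card : ℝ) * v j ^ 2 := by
        rw [show (∑ e ∈ F, if j ∈ e.erase i then v j ^ 2 else 0)
            = ∑ e ∈ F, if j ∈ e then v j ^ 2 else 0 from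
          Finset.sum_congr rfl fun e he => by simp [Finset.mem_erase, hij]]
        rw [Finset.sum_ite, Finset.sum_const_zero, Finset.sum_const, add_zero,
          nsmul_eq_mul]
      have hcount : (F.filter fun e => j ∈ e).card = (n - 2).choose (d - 2) := by
        rw [show F.filter (fun e => j ∈ e)
            = (univ : Finset (Finset (Fin n))).filter
              (fun e => (e.card = d ∧ i ∈ e) ∧ j ∈ e) from by
          simp [F, Finset.filter_filter]]
        exact count_edges n d hd i j hij
      rw [heq, hcount]
  calc ∑ e ∈ F, (∑ j ∈ e.erase i, v j) ^ 2
      ≤ ((d : ℝ) - 1) * ∑ e ∈ F, ∑ j ∈ e.erase i, v j ^ 2 := by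
        rw [Finset.mul_sum]; exact step1
    _ ≤ ((d : ℝ) - 1) * (((n - 2).choose (d - 2) : ℝ) * ∑ j, v j ^ 2) := by
        apply mul_le_mul_of_nonneg_left step2
        have : (1 : ℝ) ≤ d := by exact_mod_cast (by omega : 1 ≤ d)
        linarith
    _ = ((d : ℝ) - 1) * ((n - 2).choose (d - 2) : ℝ) * (∑ j, v j ^ 2) := by ring

/-- **Row variance proxy bound.** `Σ_{e : card d, i ∈ e} a_e² ≤ (d−1)·C(n−2,d−2)·‖v‖₂²`,
where `a_e = Σ_{j ∈ e∖{i}} v_j`. -/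
theorem sum_ae_sq_bound (n d : ℕ) (hd : 2 ≤ d) (hn : d ≤ n) (i : Fin n) (v : Fin n → ℝ) :
    ∑ e ∈ (univ : Finset (Finset (Fin n))).filter (fun e => e.card = d ∧ i ∈ e),
        (∑ j ∈ e.erase i, v j) ^ 2
      ≤ ((d : ℝ) - 1) * ((n - 2).choose (d - 2) : ℝ) * norm2 v ^ 2 := by
  rw [norm2, Real.sq_sqrt (by positivity)]
  exact sum_ae_sq_bound' n d hd hn i v
end
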